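/- arXiv:1407.1648 — 5 statements merged into one kernel-verified Lean document; each statement's English description precedes it below -/
import Mathlib

section
/- Let r, s be positive integers, let A_1, A_2, …, A_r be nonnegative real s×s matrices, and let A be the (r,s)-block circulant matrix with first block row (A_1, A_2, …, A_r). Then the spectral radius of A equals the spectral radius of the sum A_1 + A_2 + ⋯ + A_r. -/
/-!
Write `C` for the block circulant matrix and `S = ∑ i, A i`. The block-constant vectors
`v ∘ Prod.snd` are invariant under `C`, which acts on them as `S`; in particular
`C ^ n *ᵥ 1 = (S ^ n *ᵥ 1) ∘ Prod.snd`. For a nonnegative matrix the `ℓ∞` operator norm is the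
largest row sum `‖M *ᵥ 1‖`, so `‖C ^ n‖ = ‖S ^ n‖` for every `n`, and Gelfand's formula
`ρ(M) = lim ‖M ^ n‖ ^ (1 / n)` gives `ρ(C) = ρ(S)`.
-/

/-- The spectral radius of a square real matrix: the maximum (supremum) of the
moduli of its complex eigenvalues. -/
noncomputable def specRad {m : Type*} [Fintype m] [DecidableEq m]
    (M : Matrix m m ℝ) : ℝ :=
  sSup {x : ℝ | ∃ z ∈ spectrum ℂ (M.map (algebraMap ℝ ℂ)), ‖z‖ = x}

/-- The `(r,s)`-block circulant matrix with first block row `A 0, A 1, …, A (r-1)`: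
the block in position `(i, j)` is `A (j - i)` (subtraction mod `r`). -/
def blockCirc (r s : ℕ) (A : Fin r → Matrix (Fin s) (Fin s) ℝ) :
    Matrix (Fin r × Fin s) (Fin r × Fin s) ℝ :=
  Matrix.of fun p q => A (q.1 - p.1) p.2 q.2

open Matrix
open scoped ENNReal

theorem spectralRadius_eq_of_nnnorm_pow_eq {A B : Type*} [NormedRing A] [NormedAlgebra ℂ A]
    [CompleteSpace A] [NormedRing B] [NormedAlgebra ℂ B] [CompleteSpace B] {a : A} {b : B}
    (h : ∀ n : ℕ, ‖a ^ n‖₊ = ‖b ^ n‖₊) : spectralRadius ℂ a = spectralRadius ℂ b :=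
  tendsto_nhds_unique
    (by simpa only [h] using spectrum.pow_nnnorm_pow_one_div_tendsto_nhds_spectralRadius a)
    (spectrum.pow_nnnorm_pow_one_div_tendsto_nhds_spectralRadius b)

theorem sSup_norm_spectrum_eq_toReal_spectralRadius {A : Type*} [NormedRing A]
    [NormedAlgebra ℂ A] [CompleteSpace A] (a : A) :
    sSup {x : ℝ | ∃ z ∈ spectrum ℂ a, ‖z‖ = x} = (spectralRadius ℂ a).toReal := by
  rcases (spectrum ℂ a).eq_empty_or_nonempty with hempty | hne
  · simp [hempty, spectralRadius]
  obtain ⟨z₀, hz₀, hz₀_eq⟩ := spectrum.exists_nnnorm_eq_spectralRadius_of_nonempty hne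
  have hgreatest : IsGreatest {x : ℝ | ∃ z ∈ spectrum ℂ a, ‖z‖ = x} ‖z₀‖ := by
    refine ⟨⟨z₀, hz₀, rfl⟩, ?_⟩
    rintro _ ⟨z, hz, rfl⟩
    have : (‖z‖₊ : ℝ≥0∞) ≤ ‖z₀‖₊ := hz₀_eq ▸ le_iSup₂ (α := ℝ≥0∞) z hz
    exact_mod_cast this
  rw [hgreatest.csSup_eq, ← hz₀_eq]
  rfl

section LinftyOp

attribute [local instance] Matrix.linftyOpSeminormedAddCommGroup
  Matrix.linftyOpNormedAddCommGroup Matrix.linftyOpNormedRing Matrix.linftyOpNormedAlgebra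

variable {m n : Type*} [Fintype m] [Fintype n]

theorem Matrix.linfty_opNNNorm_map_eq {α β : Type*} [SeminormedAddCommGroup α]
    [SeminormedAddCommGroup β] (M : Matrix m n α) (f : α → β) (hf : ∀ a, ‖f a‖₊ = ‖a‖₊) :
    ‖M.map f‖₊ = ‖M‖₊ := by
  simp [linfty_opNNNorm_def, hf]

theorem Matrix.linfty_opNorm_eq_norm_mulVec_one {M : Matrix m n ℝ} (hM : ∀ i j, 0 ≤ M i j) :
    ‖M‖ = ‖M *ᵥ 1‖ := by
  rw [linfty_opNorm_def, Pi.norm_def]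
  congr 2
  ext i
  simp [mulVec, dotProduct, abs_of_nonneg, hM, Finset.sum_nonneg]

variable [DecidableEq m] [DecidableEq n]

theorem specRad_eq_toReal_spectralRadius (M : Matrix m m ℝ) :
    specRad M = (spectralRadius ℂ (M.map (algebraMap ℝ ℂ))).toReal :=
  sSup_norm_spectrum_eq_toReal_spectralRadius _

theorem specRad_eq_of_linfty_nnnorm_pow_eq {M : Matrix m m ℝ} {N : Matrix n n ℝ}
    (h : ∀ k : ℕ, ‖M ^ k‖₊ = ‖N ^ k‖₊) : specRad M = specRad N := by
  simp only [specRad_eq_toReal_spectralRadius]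
  congr 1
  have hmap : ∀ x : ℝ, ‖algebraMap ℝ ℂ x‖₊ = ‖x‖₊ := Complex.nnnorm_real
  refine spectralRadius_eq_of_nnnorm_pow_eq fun k => ?_
  rw [← Matrix.map_pow, ← Matrix.map_pow, linfty_opNNNorm_map_eq _ _ hmap,
    linfty_opNNNorm_map_eq _ _ hmap, h]

variable {r s : ℕ} [NeZero r] (A : Fin r → Matrix (Fin s) (Fin s) ℝ)

theorem blockCirc_mulVec_comp_snd (v : Fin s → ℝ) :
    blockCirc r s A *ᵥ (v ∘ Prod.snd) = ((∑ i, A i) *ᵥ v) ∘ Prod.snd := by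
  ext ⟨i, a⟩
  simp only [mulVec, dotProduct, Function.comp_apply, blockCirc, of_apply,
    Fintype.sum_prod_type_right, Matrix.sum_apply, Finset.sum_mul]
  exact Finset.sum_congr rfl fun b _ => (Equiv.subRight i).sum_comp fun k => A k a b * v b

theorem blockCirc_pow_mulVec_comp_snd (n : ℕ) (v : Fin s → ℝ) :
    blockCirc r s A ^ n *ᵥ (v ∘ Prod.snd) = ((∑ i, A i) ^ n *ᵥ v) ∘ Prod.snd := by
  induction n with
  | zero => simp only [pow_zero, one_mulVec]
  | succ n ih =>
    rw [pow_succ', pow_succ', ← mulVec_mulVec, ← mulVec_mulVec, ih, blockCirc_mulVec_comp_snd]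

theorem nnnorm_blockCirc_pow (hA : ∀ i a b, 0 ≤ A i a b) (n : ℕ) :
    ‖blockCirc r s A ^ n‖₊ = ‖(∑ i, A i) ^ n‖₊ := by
  have hS : ∀ a b, 0 ≤ (∑ i, A i) a b := fun a b => by
    simpa only [Matrix.sum_apply] using Finset.sum_nonneg fun i _ => hA i a b
  have hone : (1 : Fin r × Fin s → ℝ) = (1 : Fin s → ℝ) ∘ Prod.snd := rfl
  refine NNReal.eq ?_
  rw [coe_nnnorm, coe_nnnorm,
    linfty_opNorm_eq_norm_mulVec_one (M := blockCirc r s A ^ n)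
      (pow_apply_nonneg (fun _ _ => hA _ _ _) n),
    linfty_opNorm_eq_norm_mulVec_one (pow_apply_nonneg hS n),
    hone, blockCirc_pow_mulVec_comp_snd, Prod.snd_surjective.pi_norm_comp]

end LinftyOp

theorem stmt0_general (r s : ℕ) (hr : 0 < r)
    (A : Fin r → Matrix (Fin s) (Fin s) ℝ)
    (hA : ∀ i a b, 0 ≤ A i a b) :
    specRad (blockCirc r s A) = specRad (∑ i, A i) :=
  have : NeZero r := ⟨hr.ne'⟩
  specRad_eq_of_linfty_nnnorm_pow_eq (nnnorm_blockCirc_pow A hA)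

theorem stmt0 (r s : ℕ) (hr : 0 < r) (hs : 0 < s)
    (A : Fin r → Matrix (Fin s) (Fin s) ℝ)
    (hA : ∀ i a b, 0 ≤ A i a b) :
    specRad (blockCirc r s A) = specRad (∑ i, A i) :=
  stmt0_general r s hr A hA
end

section
/- For every integer n ≥ 3, the set of complex eigenvalues of the divided compacted matrix DC_n equals the union of the set of complex eigenvalues of the compacted matrix C_n with {1}; that is, Spec(DC_n) = Spec(C_n) ∪ {1}. -/
/-- Entry `(i+1, j+1)` of the compacted matrix `C_n` of rank `n` (zero-indexed
`i, j ∈ {0, …, 2n-2}` corresponding to one-indexed indices in `{1, …, 2n-1}`). -/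
def Cfun (n i j : ℕ) : ℝ :=
  if i + 1 ≤ n - 3 ∧ j = i + 1 then 1
  else if i = n - 3 ∧ (j = n - 2 ∨ j = n - 1) then 1
  else if i = n - 2 ∧ j + 1 ≤ n then (n : ℝ) - 2
  else if i = n - 2 ∧ n ≤ j then (n : ℝ) - 1
  else if i = n - 1 then 1
  else if i = n ∧ j + 2 ≤ n then (n : ℝ) - 1
  else if i = n ∧ n - 1 ≤ j then (n : ℝ) - 2
  else if i = n + 1 ∧ (j = n - 1 ∨ j = n) then 1
  else if n + 2 ≤ i ∧ j + 1 = i then 1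
  else 0

/-- The compacted matrix `C_n` of rank `n`, of size `(2n-1) × (2n-1)`. -/
def Cmat (n : ℕ) : Matrix (Fin (2 * n - 1)) (Fin (2 * n - 1)) ℝ :=
  Matrix.of fun i j => Cfun n i.val j.val

/-- Entry `(i+1, j+1)` of the divided compacted matrix `DC_n` of rank `n`
(zero-indexed `i, j ∈ {0, …, 2n-1}`). -/
def DCfun (n i j : ℕ) : ℝ :=
  if i + 2 ≤ n then (if j + 1 ≤ n then Cfun n i j else Cfun n i (j - 1))
  else if i = n - 1 then (if j + 1 ≤ n then 1 else 0)
  else if i = n then (if j + 1 ≤ n then 0 else 1)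
  else (if j + 1 ≤ n then Cfun n (i - 1) j else Cfun n (i - 1) (j - 1))

/-- The divided compacted matrix `DC_n` of rank `n`, of size `2n × 2n`. -/
def DCmat (n : ℕ) : Matrix (Fin (2 * n)) (Fin (2 * n)) ℝ :=
  Matrix.of fun i j => DCfun n i.val j.val

/- ## Auxiliary lemmas -/

open Matrix in
lemma aux_mem_spec_iff {m : ℕ} (M : Matrix (Fin m) (Fin m) ℂ) (μ : ℂ) :
    μ ∈ spectrum ℂ M ↔ ∃ v, v ≠ 0 ∧ M.mulVec v = μ • v := by
  rw [spectrum.mem_iff, Matrix.isUnit_iff_isUnit_det, isUnit_iff_ne_zero, not_ne_iff,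
    ← Matrix.exists_mulVec_eq_zero_iff]
  constructor
  · rintro ⟨v, hv, h⟩
    refine ⟨v, hv, ?_⟩
    have : (algebraMap ℂ (Matrix (Fin m) (Fin m) ℂ)) μ *ᵥ v = μ • v := by
      simp [Algebra.algebraMap_eq_smul_one, Matrix.smul_mulVec]
    rw [Matrix.sub_mulVec, this, sub_eq_zero] at h
    exact h.symm
  · rintro ⟨v, hv, h⟩
    refine ⟨v, hv, ?_⟩
    have : (algebraMap ℂ (Matrix (Fin m) (Fin m) ℂ)) μ *ᵥ v = μ • v := by
      simp [Algebra.algebraMap_eq_smul_one, Matrix.smul_mulVec]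
    rw [Matrix.sub_mulVec, this, h, sub_self]

open Matrix in
lemma aux_spec_transpose {m : ℕ} (M : Matrix (Fin m) (Fin m) ℂ) :
    spectrum ℂ Mᵀ = spectrum ℂ M := by
  ext μ
  rw [spectrum.mem_iff, spectrum.mem_iff, Matrix.isUnit_iff_isUnit_det,
    Matrix.isUnit_iff_isUnit_det, ← Matrix.det_transpose (algebraMap ℂ _ μ - M)]
  congr! 2
  rw [Matrix.transpose_sub, Algebra.algebraMap_eq_smul_one, Matrix.transpose_smul,
    Matrix.transpose_one]

lemma colmerge (m : ℕ) (c d w u : ℕ → ℂ)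
    (hd : ∀ j, j < 2*m+2 → d j = if j ≤ m then c j else c (j-1))
    (hu1 : ∀ j, j < m → u j = w j)
    (hu2 : u m = w m + w (m+1))
    (hu3 : ∀ j, m < j → j < 2*m+1 → u j = w (j+1)) :
    ∑ j ∈ Finset.range (2*m+2), d j * w j = ∑ j ∈ Finset.range (2*m+1), c j * u j := by
  have e1 : 2*m+2 = (m+1)+(m+1) := by omega
  have e2 : 2*m+1 = m+(m+1) := by omega
  rw [e1, Finset.sum_range_add (fun j => d j * w j) (m+1) (m+1),
      e2, Finset.sum_range_add (fun j => c j * u j) m (m+1),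
      Finset.sum_range_succ (fun j => d j * w j) m,
      Finset.sum_range_succ' (fun j => d ((m+1)+j) * w ((m+1)+j)) m,
      Finset.sum_range_succ' (fun j => c (m+j) * u (m+j)) m]
  have A : ∀ j ∈ Finset.range m, d j * w j = c j * u j := by
    intro j hj; rw [Finset.mem_range] at hj
    rw [hd j (by omega), if_pos (by omega), hu1 j hj]
  have B : ∀ j ∈ Finset.range m,
      d ((m+1)+(j+1)) * w ((m+1)+(j+1)) = c (m+(j+1)) * u (m+(j+1)) := by
    intro j hj; rw [Finset.mem_range] at hj
    rw [hd _ (by omega), if_neg (by omega), hu3 _ (by omega) (by omega)]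
    have e3 : m + 1 + (j+1) - 1 = m + (j+1) := by omega
    have e4 : m + 1 + (j+1) = m + (j+1) + 1 := by omega
    rw [e3, e4]
  rw [Finset.sum_congr rfl A, Finset.sum_congr rfl B, hd m (by omega), if_pos le_rfl,
      hd (m+1+0) (by omega), if_neg (by omega)]
  have e5 : m + 1 + 0 - 1 = m := by omega
  have e6 : m + 1 + 0 = m + 1 := by omega
  have e7 : m + 0 = m := by omega
  rw [e5, e6, e7, hu2]
  ring

lemma rowmerge (m : ℕ) (c d w u : ℕ → ℂ)
    (h1 : ∀ i, i < m → d i = c i)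
    (h2 : d m + d (m+1) = c m)
    (h3 : ∀ i, i < m → d (m+2+i) = c (m+1+i))
    (hw1 : ∀ i, i ≤ m → w i = u i)
    (hw1' : w (m+1) = u m)
    (hw2 : ∀ i, i < m → w (m+2+i) = u (m+1+i)) :
    ∑ i ∈ Finset.range (2*m+2), d i * w i = ∑ i ∈ Finset.range (2*m+1), c i * u i := by
  have e1 : 2*m+2 = (m+1)+(m+1) := by omega
  have e2 : 2*m+1 = m+(m+1) := by omega
  rw [e1, Finset.sum_range_add (fun i => d i * w i) (m+1) (m+1),
      e2, Finset.sum_range_add (fun i => c i * u i) m (m+1),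
      Finset.sum_range_succ (fun i => d i * w i) m,
      Finset.sum_range_succ' (fun i => d ((m+1)+i) * w ((m+1)+i)) m,
      Finset.sum_range_succ' (fun i => c (m+i) * u (m+i)) m]
  have A : ∀ i ∈ Finset.range m, d i * w i = c i * u i := by
    intro i hi; rw [Finset.mem_range] at hi
    rw [h1 i hi, hw1 i (by omega)]
  have B : ∀ i ∈ Finset.range m,
      d ((m+1)+(i+1)) * w ((m+1)+(i+1)) = c (m+(i+1)) * u (m+(i+1)) := by
    intro i hi; rw [Finset.mem_range] at hi
    have e3 : m + 1 + (i+1) = m + 2 + i := by omega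
    have e4 : m + (i+1) = m + 1 + i := by omega
    rw [e3, e4, h3 i hi, hw2 i hi]
  rw [Finset.sum_congr rfl A, Finset.sum_congr rfl B]
  have e6 : m + 1 + 0 = m + 1 := by omega
  have e7 : m + 0 = m := by omega
  rw [e6, e7, hw1 m le_rfl, hw1', ← h2]
  ring

lemma Cfun_row_ones {n : ℕ} (hn : 3 ≤ n) (j : ℕ) : Cfun n (n-1) j = 1 := by
  simp only [Cfun]
  rw [if_neg (by omega), if_neg (by omega), if_neg (by omega), if_neg (by omega)]
  simp

lemma DCfun_low {n i : ℕ} (hi : i + 2 ≤ n) (j : ℕ) :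
    DCfun n i j = if j + 1 ≤ n then Cfun n i j else Cfun n i (j-1) := by
  simp only [DCfun, if_pos hi]

lemma DCfun_mid1 {n : ℕ} (hn : 3 ≤ n) (j : ℕ) :
    DCfun n (n-1) j = if j+1 ≤ n then 1 else 0 := by
  simp only [DCfun]
  rw [if_neg (by omega)]
  simp

lemma DCfun_mid2 {n : ℕ} (hn : 3 ≤ n) (j : ℕ) :
    DCfun n n j = if j+1 ≤ n then 0 else 1 := by
  simp only [DCfun]
  rw [if_neg (by omega), if_neg (by omega)]
  simp

lemma DCfun_high {n i : ℕ} (hn : 3 ≤ n) (hi : n+1 ≤ i) (j : ℕ) :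
    DCfun n i j = if j+1 ≤ n then Cfun n (i-1) j else Cfun n (i-1) (j-1) := by
  simp only [DCfun]
  rw [if_neg (by omega), if_neg (by omega), if_neg (by omega)]

lemma eig_iff {k : ℕ} (M : Matrix (Fin k) (Fin k) ℂ) (g : ℕ → ℕ → ℝ)
    (hM : ∀ i j : Fin k, M i j = (g i.val j.val : ℂ))
    (v : Fin k → ℂ) (vl : ℕ → ℂ) (hv : ∀ i : Fin k, v i = vl i.val) (μ : ℂ) :
    M.mulVec v = μ • v ↔
      ∀ i : Fin k, ∑ j ∈ Finset.range k, (g i.val j : ℂ) * vl j = μ * vl i.val := by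
  rw [funext_iff]
  apply forall_congr'
  intro i
  have h1 : M.mulVec v i = ∑ j ∈ Finset.range k, (g i.val j : ℂ) * vl j := by
    simp only [Matrix.mulVec, dotProduct]
    rw [← Fin.sum_univ_eq_sum_range (fun j => (g i.val j : ℂ) * vl j) k]
    exact Finset.sum_congr rfl fun j _ => by rw [hM, hv]
  rw [h1, Pi.smul_apply, smul_eq_mul, hv i]

lemma one_mem_spec {n : ℕ} (hn : 3 ≤ n) :
    (1:ℂ) ∈ spectrum ℂ ((DCmat n).map (algebraMap ℝ ℂ)) := by
  rw [aux_mem_spec_iff]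
  classical
  set vl : ℕ → ℂ := fun i => if i = n-1 then 1 else if i = n then -1 else 0 with hvl
  refine ⟨fun i => vl i.val, ?_, ?_⟩
  · intro h0
    have h1 := congrFun h0 ⟨n-1, by omega⟩
    simp only [hvl, Pi.zero_apply, if_pos rfl] at h1
    exact one_ne_zero h1
  · refine (eig_iff ((DCmat n).map (algebraMap ℝ ℂ)) (DCfun n) ?_ _ vl (fun _ => rfl) 1).mpr ?_
    · intro i j
      simp [DCmat, Matrix.map_apply, Matrix.of_apply]
    intro i
    have hsplit : ∀ j, (DCfun n i.val j : ℂ) * vl j =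
        (if j = n-1 then (DCfun n i.val (n-1) : ℂ) else 0)
          + (if j = n then -(DCfun n i.val n : ℂ) else 0) := by
      intro j
      simp only [hvl]
      by_cases h1 : j = n-1
      · rw [if_pos h1, if_pos h1, if_neg (show ¬ j = n by omega)]
        rw [h1]; ring
      · by_cases h2 : j = n
        · rw [if_neg h1, if_neg h1, if_pos h2, if_pos h2, h2]; ring
        · rw [if_neg h1, if_neg h1, if_neg h2, if_neg h2]; ring
    rw [Finset.sum_congr rfl fun j _ => hsplit j, Finset.sum_add_distrib,
      Finset.sum_ite_eq' (Finset.range (2*n)) (n-1)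
        (fun _ => (DCfun n i.val (n-1) : ℂ)),
      Finset.sum_ite_eq' (Finset.range (2*n)) n (fun _ => -(DCfun n i.val n : ℂ)),
      if_pos (Finset.mem_range.2 (by omega)), if_pos (Finset.mem_range.2 (by omega))]
    have hiv : i.val < 2*n := i.isLt
    have key : (DCfun n i.val (n-1) : ℂ) + -(DCfun n i.val n : ℂ) = vl i.val := by
      by_cases h1 : i.val + 2 ≤ n
      · have ha : DCfun n i.val (n-1) = Cfun n i.val (n-1) := by
          rw [DCfun_low h1, if_pos (by omega)]
        have hb : DCfun n i.val n = Cfun n i.val (n-1) := by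
          rw [DCfun_low h1, if_neg (by omega)]
        rw [ha, hb]
        simp only [hvl, if_neg (show ¬ i.val = n-1 by omega), if_neg (show ¬ i.val = n by omega)]
        ring
      · by_cases h2 : i.val = n-1
        · rw [h2, DCfun_mid1 hn, DCfun_mid1 hn, if_pos (by omega), if_neg (by omega)]
          simp only [hvl, if_pos rfl]
          norm_num
        · by_cases h3 : i.val = n
          · rw [h3, DCfun_mid2 hn, DCfun_mid2 hn, if_pos (by omega), if_neg (by omega)]
            simp only [hvl]
            rw [if_neg (show ¬ n = n - 1 by omega)]
            norm_num
          · have h4 : n + 1 ≤ i.val := by omega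
            have ha : DCfun n i.val (n-1) = Cfun n (i.val-1) (n-1) := by
              rw [DCfun_high hn h4, if_pos (by omega)]
            have hb : DCfun n i.val n = Cfun n (i.val-1) (n-1) := by
              rw [DCfun_high hn h4, if_neg (by omega)]
            rw [ha, hb]
            simp only [hvl, if_neg h2, if_neg h3]
            ring
    rw [key]
    simp only [hvl]
    split_ifs <;> ring

lemma specC_mem {n : ℕ} (hn : 3 ≤ n) {μ : ℂ}
    (hμ : μ ∈ spectrum ℂ ((Cmat n).map (algebraMap ℝ ℂ))) :
    μ ∈ spectrum ℂ ((DCmat n).map (algebraMap ℝ ℂ)) := by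
  rw [← aux_spec_transpose] at hμ ⊢
  rw [aux_mem_spec_iff] at hμ ⊢
  obtain ⟨u', hu0, hueig⟩ := hμ
  classical
  set uu : ℕ → ℂ := fun j => if h : j < 2*n-1 then u' ⟨j, h⟩ else 0 with huu
  have huv : ∀ i : Fin (2*n-1), u' i = uu i.val := by
    intro i; simp only [huu]; rw [dif_pos i.isLt]
  have hueq' : ∀ j, j < 2*n-1 →
      ∑ i ∈ Finset.range (2*n-1), (Cfun n i j : ℂ) * uu i = μ * uu j := by
    intro j hj
    exact (eig_iff _ (fun a b => Cfun n b a)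
      (fun jj ii => by simp [Cmat, Matrix.transpose_apply, Matrix.map_apply])
      u' uu huv μ).mp hueig ⟨j, hj⟩
  set ww : ℕ → ℂ := fun i => if i + 1 ≤ n then uu i else uu (i-1) with hww
  refine ⟨fun i => ww i.val, ?_, ?_⟩
  · obtain ⟨k, hk⟩ := Function.ne_iff.mp hu0
    intro h0
    apply hk
    rw [huv k]
    by_cases hkn : k.val + 1 ≤ n
    · have h1 := congrFun h0 ⟨k.val, by omega⟩
      simp only [Pi.zero_apply] at h1
      have h2 : ww k.val = uu k.val := by simp only [hww]; rw [if_pos hkn]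
      rw [← h2]; exact h1
    · have h1 := congrFun h0 ⟨k.val + 1, by have := k.isLt; omega⟩
      simp only [Pi.zero_apply] at h1
      have h2 : ww (k.val + 1) = uu k.val := by
        simp only [hww]; rw [if_neg (by omega)]
        congr 1 <;> omega
      rw [← h2]; exact h1
  · refine (eig_iff _ (fun a b => DCfun n b a)
      (fun jj ii => by simp [DCmat, Matrix.transpose_apply, Matrix.map_apply])
      _ ww (fun _ => rfl) μ).mpr ?_
    intro jj
    show ∑ i ∈ Finset.range (2*n), (DCfun n i jj.val : ℂ) * ww i = μ * ww jj.val
    have hj : jj.val < 2*n := jj.isLt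
    set j := jj.val with hjdef
    set j' : ℕ := if j + 1 ≤ n then j else j - 1 with hj'
    have hj'lt : j' < 2*n-1 := by simp only [hj']; split_ifs <;> omega
    have h1 : ∀ i, i < n-1 → ((DCfun n i j : ℂ)) = ((Cfun n i j' : ℂ)) := by
      intro i hi
      rw [DCfun_low (show i+2 ≤ n by omega)]
      simp only [hj']
      split_ifs <;> rfl
    have h2 : ((DCfun n (n-1) j : ℂ)) + ((DCfun n (n-1+1) j : ℂ)) = ((Cfun n (n-1) j' : ℂ)) := by
      have e : n-1+1 = n := by omega
      rw [e, DCfun_mid1 hn, DCfun_mid2 hn, Cfun_row_ones hn]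
      split_ifs <;> norm_num
    have h3 : ∀ i, i < n-1 → ((DCfun n (n-1+2+i) j : ℂ)) = ((Cfun n (n-1+1+i) j' : ℂ)) := by
      intro i hi
      have e : n-1+2+i = n+1+i := by omega
      have e' : n-1+1+i = n+i := by omega
      rw [e, e', DCfun_high hn (by omega)]
      have e'' : n+1+i-1 = n+i := by omega
      rw [e'']
      simp only [hj']
      split_ifs <;> rfl
    have hw1 : ∀ i, i ≤ n-1 → ww i = uu i := by
      intro i hi; simp only [hww]; rw [if_pos (by omega)]
    have hw1' : ww (n-1+1) = uu (n-1) := by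
      simp only [hww]; rw [if_neg (by omega)]
      congr 1 <;> omega
    have hw2 : ∀ i, i < n-1 → ww (n-1+2+i) = uu (n-1+1+i) := by
      intro i hi; simp only [hww]; rw [if_neg (by omega)]
      congr 1 <;> omega
    have hrm := rowmerge (n-1) (fun i => (Cfun n i j' : ℂ)) (fun i => (DCfun n i j : ℂ))
      ww uu h1 h2 h3 hw1 hw1' hw2
    have e1 : 2*(n-1)+2 = 2*n := by omega
    have e2 : 2*(n-1)+1 = 2*n-1 := by omega
    rw [e1, e2] at hrm
    rw [hrm, hueq' j' hj'lt]
    congr 1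
    simp only [hww, hj']
    split_ifs <;> rfl

lemma specDC_cases {n : ℕ} (hn : 3 ≤ n) {μ : ℂ}
    (hμ : μ ∈ spectrum ℂ ((DCmat n).map (algebraMap ℝ ℂ))) :
    μ ∈ spectrum ℂ ((Cmat n).map (algebraMap ℝ ℂ)) ∨ μ = 1 := by
  rw [aux_mem_spec_iff] at hμ
  obtain ⟨w', hw0, hweig⟩ := hμ
  classical
  set ww : ℕ → ℂ := fun j => if h : j < 2*n then w' ⟨j, h⟩ else 0 with hww
  have hwv : ∀ i : Fin (2*n), w' i = ww i.val := by
    intro i; simp only [hww]; rw [dif_pos i.isLt]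
  have heig' : ∀ i, i < 2*n →
      ∑ j ∈ Finset.range (2*n), (DCfun n i j : ℂ) * ww j = μ * ww i := by
    intro i hi
    exact (eig_iff _ (DCfun n)
      (fun ii jj => by simp [DCmat, Matrix.map_apply]) w' ww hwv μ).mp hweig ⟨i, hi⟩
  set uu : ℕ → ℂ := fun j => if j ≤ n-2 then ww j
      else if j = n-1 then ww (n-1) + ww n else ww (j+1) with huu
  -- hypotheses for colmerge, shared by all rows
  have hcu1 : ∀ j, j < n-1 → uu j = ww j := by
    intro j hj; simp only [huu]; rw [if_pos (by omega)]
  have hcu2 : uu (n-1) = ww (n-1) + ww (n-1+1) := by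
    simp only [huu]; rw [if_neg (by omega), if_pos trivial]
    congr 2 <;> omega
  have hcu3 : ∀ j, n-1 < j → j < 2*(n-1)+1 → uu j = ww (j+1) := by
    intro j hj1 hj2; simp only [huu]; rw [if_neg (by omega), if_neg (by omega)]
  have e1 : 2*(n-1)+2 = 2*n := by omega
  have e2 : 2*(n-1)+1 = 2*n-1 := by omega
  by_cases hu : ∀ j, j < 2*n-1 → uu j = 0
  · right
    have hwj : ∀ j, j < 2*n → ¬ j = n-1 → ¬ j = n → ww j = 0 := by
      intro j hj hj1 hj2
      by_cases hc : j ≤ n-2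
      · have h := hu j (by omega)
        simp only [huu] at h
        rwa [if_pos hc] at h
      · have h := hu (j-1) (by omega)
        simp only [huu] at h
        rw [if_neg (by omega), if_neg (by omega)] at h
        have e : j - 1 + 1 = j := by omega
        rwa [e] at h
    have hsum0 : ww (n-1) + ww n = 0 := by
      have h := hu (n-1) (by omega)
      simp only [huu] at h
      rwa [if_neg (by omega), if_pos trivial] at h
    have hwn : ww n ≠ 0 := by
      intro h0
      apply hw0
      funext k
      rw [hwv k]
      show ww k.val = 0
      by_cases hk1 : k.val = n-1
      · rw [hk1]
        have h1 : ww (n-1) = - ww n := eq_neg_of_add_eq_zero_left hsum0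
        rw [h1, h0, neg_zero]
      · by_cases hk2 : k.val = n
        · rw [hk2, h0]
        · exact hwj k.val k.isLt hk1 hk2
    have hrow := heig' n (by omega)
    have hs : ∑ j ∈ Finset.range (2*n), (DCfun n n j : ℂ) * ww j = ww n := by
      rw [Finset.sum_eq_single_of_mem n (Finset.mem_range.2 (by omega))]
      · rw [DCfun_mid2 hn, if_neg (by omega)]; norm_num
      · intro j hj hjn
        by_cases hj1 : j = n-1
        · rw [hj1, DCfun_mid2 hn, if_pos (by omega)]; norm_num
        · rw [hwj j (Finset.mem_range.1 hj) hj1 hjn, mul_zero]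
    rw [hs] at hrow
    have hfac : (μ - 1) * ww n = 0 := by linear_combination - hrow
    rcases mul_eq_zero.mp hfac with h | h
    · exact sub_eq_zero.mp h
    · exact absurd h hwn
  · left
    rw [aux_mem_spec_iff]
    push_neg at hu
    obtain ⟨k, hk, hk0⟩ := hu
    refine ⟨fun j => uu j.val, ?_, ?_⟩
    · intro h0
      exact hk0 (by have := congrFun h0 ⟨k, hk⟩; simpa using this)
    · refine (eig_iff _ (Cfun n)
        (fun ii jj => by simp [Cmat, Matrix.map_apply]) _ uu (fun _ => rfl) μ).mpr ?_
      intro i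
      show ∑ j ∈ Finset.range (2*n-1), (Cfun n i.val j : ℂ) * uu j = μ * uu i.val
      have hi : i.val < 2*n-1 := i.isLt
      by_cases hc1 : i.val ≤ n-2
      · have hd : ∀ j, j < 2*(n-1)+2 →
            ((DCfun n i.val j : ℂ)) = if j ≤ n-1 then (Cfun n i.val j : ℂ)
              else (Cfun n i.val (j-1) : ℂ) := by
          intro j hj
          rw [DCfun_low (show i.val+2 ≤ n by omega)]
          split_ifs with ha hb hb <;> first | rfl | omega
        have hcm := colmerge (n-1) (fun j => (Cfun n i.val j : ℂ))
          (fun j => (DCfun n i.val j : ℂ)) ww uu hd hcu1 hcu2 hcu3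
        rw [e1, e2] at hcm
        rw [← hcm, heig' i.val (by omega)]
        congr 1
        simp only [huu]
        rw [if_pos hc1]
      · by_cases hc2 : i.val = n-1
        · have hones : ∀ j, (DCfun n (n-1) j : ℂ) + (DCfun n n j : ℂ) = 1 := by
            intro j
            rw [DCfun_mid1 hn, DCfun_mid2 hn]
            split_ifs <;> norm_num
          have hd : ∀ j, j < 2*(n-1)+2 →
              ((1:ℂ)) = if j ≤ n-1 then (1:ℂ) else (1:ℂ) := by
            intro j hj; split_ifs <;> rfl
          have hcm := colmerge (n-1) (fun _ => (1:ℂ)) (fun _ => (1:ℂ)) ww uu hd hcu1 hcu2 hcu3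
          rw [e1, e2] at hcm
          calc ∑ j ∈ Finset.range (2*n-1), (Cfun n i.val j : ℂ) * uu j
              = ∑ j ∈ Finset.range (2*n-1), (1:ℂ) * uu j := by
                refine Finset.sum_congr rfl fun j _ => ?_
                rw [hc2, Cfun_row_ones hn]
                norm_num
            _ = ∑ j ∈ Finset.range (2*n), (1:ℂ) * ww j := hcm.symm
            _ = ∑ j ∈ Finset.range (2*n),
                  ((DCfun n (n-1) j : ℂ) * ww j + (DCfun n n j : ℂ) * ww j) := by
                refine Finset.sum_congr rfl fun j _ => ?_
                rw [← add_mul, hones j]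
            _ = ∑ j ∈ Finset.range (2*n), (DCfun n (n-1) j : ℂ) * ww j
                  + ∑ j ∈ Finset.range (2*n), (DCfun n n j : ℂ) * ww j :=
                Finset.sum_add_distrib
            _ = μ * ww (n-1) + μ * ww n := by
                rw [heig' (n-1) (by omega), heig' n (by omega)]
            _ = μ * uu i.val := by
                rw [hc2]
                simp only [huu]
                rw [if_neg (by omega), if_pos trivial]
                ring
        · have hc3 : n ≤ i.val := by omega
          have hd : ∀ j, j < 2*(n-1)+2 →
              ((DCfun n (i.val+1) j : ℂ)) = if j ≤ n-1 then (Cfun n i.val j : ℂ)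
                else (Cfun n i.val (j-1) : ℂ) := by
            intro j hj
            rw [DCfun_high hn (by omega)]
            have e : i.val + 1 - 1 = i.val := by omega
            rw [e]
            split_ifs with ha hb hb <;> first | rfl | omega
          have hcm := colmerge (n-1) (fun j => (Cfun n i.val j : ℂ))
            (fun j => (DCfun n (i.val+1) j : ℂ)) ww uu hd hcu1 hcu2 hcu3
          rw [e1, e2] at hcm
          rw [← hcm, heig' (i.val+1) (by omega)]
          congr 1
          simp only [huu]
          rw [if_neg hc1, if_neg hc2]

theorem stmt7 (n : ℕ) (hn : 3 ≤ n) :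
    spectrum ℂ ((DCmat n).map (algebraMap ℝ ℂ))
      = spectrum ℂ ((Cmat n).map (algebraMap ℝ ℂ)) ∪ {1} := by
  apply Set.eq_of_subset_of_subset
  · intro μ hμ
    rcases specDC_cases hn hμ with h | h
    · exact Set.mem_union_left _ h
    · exact Set.mem_union_right _ (by rw [h]; exact Set.mem_singleton 1)
  · intro μ hμ
    rcases hμ with h | h
    · exact specC_mem hn h
    · rw [Set.mem_singleton_iff] at h
      rw [h]
      exact one_mem_spec hn
end

section
/- For every integer n ≥ 3, the spectral radius of the divided compacted matrix DC_n equals the spectral radius of the super compacted matrix SC_n. -/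
/-- Entry `(i+1, j+1)` of the super compacted matrix `SC_n` of rank `n`
(zero-indexed `i, j ∈ {0, …, n-1}`). -/
def SCfun (n i j : ℕ) : ℝ :=
  if i + 3 ≤ n ∧ j = i + 1 then 1
  else if i = n - 1 then 1
  else if i = n - 3 ∧ j = n - 1 then 2
  else if i = n - 2 ∧ j + 2 ≤ n then 2 * (n : ℝ) - 3
  else if i = n - 2 ∧ j = n - 1 then 2 * (n : ℝ) - 4
  else 0

/-- The super compacted matrix `SC_n` of rank `n`, of size `n × n`. -/
def SCmat (n : ℕ) : Matrix (Fin n) (Fin n) ℝ :=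
  Matrix.of fun i j => SCfun n i.val j.val

/-
`DC_n` is centrosymmetric: reversing the order of both rows and columns fixes it. Writing `A`, `B`
for its upper blocks and `J` for the exchange matrix, the subspaces `{(u, J u)}` and `{(u, -J u)}`
are invariant, so the characteristic polynomial of `DC_n` factors as `χ(A + B J) · χ(A - B J)`.
Here `A + B J = SC_n`, while an eigenvector of `A - B J` is a geometric progression whose ratio is
an `n`-th root of unity, so the eigenvalues of `A - B J` lie on the unit circle. They cannot raise
the spectral radius, because `tr SC_n = 2n - 2 > n` forces an eigenvalue of `SC_n` of modulus at
least `1`.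
-/

open Matrix

theorem csSup_union_eq_left {α : Type*} [ConditionallyCompleteLattice α] {s t : Set α}
    (hs : BddAbove s) {x : α} (hx : x ∈ s) (ht : ∀ y ∈ t, y ≤ x) : sSup (s ∪ t) = sSup s :=
  le_antisymm
    (csSup_le ⟨x, Or.inl hx⟩ fun y hy =>
      hy.elim (le_csSup hs) fun hy => (ht y hy).trans (le_csSup hs hx))
    (csSup_le_csSup (hs.union ⟨x, ht⟩) ⟨x, hx⟩ Set.subset_union_left)

section Spectrum

variable {m : Type*} [Fintype m] [DecidableEq m]

theorem Matrix.exists_mulVec_eq_smul_of_mem_spectrum {K : Type*} [Field K] {A : Matrix m m K}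
    {z : K} (hz : z ∈ spectrum K A) : ∃ v ≠ 0, A *ᵥ v = z • v := by
  rw [mem_spectrum_iff_isRoot_charpoly, Polynomial.IsRoot, eval_charpoly,
    ← exists_mulVec_eq_zero_iff] at hz
  obtain ⟨v, hv, h⟩ := hz
  refine ⟨v, hv, ?_⟩
  rw [sub_mulVec, sub_eq_zero] at h
  rw [← h]
  ext i
  simp [scalar_apply, mulVec_diagonal]

theorem Matrix.spectrum_map_eq_union_of_charpoly_eq_mul {K L : Type*} [CommRing K] [Field L]
    (f : K →+* L) {m₁ m₂ : Type*} [Fintype m₁] [DecidableEq m₁] [Fintype m₂] [DecidableEq m₂]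
    {M : Matrix m m K} {P : Matrix m₁ m₁ K} {Q : Matrix m₂ m₂ K}
    (h : M.charpoly = P.charpoly * Q.charpoly) :
    spectrum L (M.map f) = spectrum L (P.map f) ∪ spectrum L (Q.map f) := by
  ext z
  simp only [Set.mem_union, mem_spectrum_iff_isRoot_charpoly, charpoly_map, h,
    Polynomial.map_mul, Polynomial.root_mul]

theorem Matrix.exists_mem_spectrum_le_norm_of_mul_lt_norm_trace (A : Matrix m m ℂ) {r : ℝ}
    (h : Fintype.card m * r < ‖A.trace‖) : ∃ z ∈ spectrum ℂ A, r ≤ ‖z‖ := by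
  by_contra! hlt
  have hroots : ∀ x ∈ A.charpoly.roots.map (‖·‖), x ≤ r := by
    simp only [Multiset.mem_map]
    rintro _ ⟨z, hz, rfl⟩
    exact (hlt z (mem_spectrum_iff_isRoot_charpoly.mpr (Polynomial.isRoot_of_mem_roots hz))).le
  have : ‖A.trace‖ ≤ Fintype.card m * r :=
    calc ‖A.trace‖ = ‖A.charpoly.roots.sum‖ := by rw [trace_eq_sum_roots_charpoly]
      _ ≤ (A.charpoly.roots.map (‖·‖)).sum := norm_multiset_sum_le _
      _ ≤ (A.charpoly.roots.map (‖·‖)).card • r := Multiset.sum_le_card_nsmul _ _ hroots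
      _ = Fintype.card m * r := by
        rw [Multiset.card_map, IsAlgClosed.card_roots_eq_natDegree, charpoly_natDegree_eq_dim,
          nsmul_eq_mul]
  linarith

end Spectrum

theorem specRad_eq_of_charpoly_eq_mul {m m₁ m₂ : Type*} [Fintype m] [DecidableEq m]
    [Fintype m₁] [DecidableEq m₁] [Fintype m₂] [DecidableEq m₂] {M : Matrix m m ℝ}
    {P : Matrix m₁ m₁ ℝ} {Q : Matrix m₂ m₂ ℝ} (h : M.charpoly = P.charpoly * Q.charpoly) {r : ℝ}
    (hP : ∃ z ∈ spectrum ℂ (P.map (algebraMap ℝ ℂ)), r ≤ ‖z‖)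
    (hQ : ∀ w ∈ spectrum ℂ (Q.map (algebraMap ℝ ℂ)), ‖w‖ ≤ r) :
    specRad M = specRad P := by
  obtain ⟨z, hz, hrz⟩ := hP
  change sSup ((‖·‖) '' _) = sSup ((‖·‖) '' _)
  rw [spectrum_map_eq_union_of_charpoly_eq_mul _ h, Set.image_union]
  refine csSup_union_eq_left ((finite_spectrum _).image _).bddAbove ⟨z, hz, rfl⟩ ?_
  rintro _ ⟨w, hw, rfl⟩
  exact (hQ w hw).trans hrz

section Centrosymmetric

variable {R : Type*} [CommRing R]

theorem Matrix.charpoly_fromBlocks_of_mul_self_eq_one {m : Type*} [Fintype m] [DecidableEq m]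
    (A B J : Matrix m m R) (hJ : J * J = 1) :
    (fromBlocks A B (J * B * J) (J * A * J)).charpoly =
      (A + B * J).charpoly * (A - B * J).charpoly := by
  set M := fromBlocks A B (J * B * J) (J * A * J)
  set P : Matrix (m ⊕ m) (m ⊕ m) R := fromBlocks 1 0 J 1
  set Q : Matrix (m ⊕ m) (m ⊕ m) R := fromBlocks 1 0 (-J) 1
  have hPQ : P * Q = 1 := by
    simp [P, Q, fromBlocks_multiply, fromBlocks_one]
  have hQMP : Q * (M * P) = fromBlocks (A + B * J) B 0 (J * (A - B * J) * J) := by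
    simp only [M, P, Q, fromBlocks_multiply]
    congr 1 <;>
      simp only [Matrix.mul_one, Matrix.one_mul, Matrix.mul_zero, Matrix.zero_mul, add_zero,
        zero_add, Matrix.mul_add, Matrix.mul_sub, Matrix.sub_mul, Matrix.neg_mul,
        Matrix.mul_assoc, hJ] <;>
      abel
  have hconj (X : Matrix m m R) : (J * X * J).charpoly = X.charpoly := by
    rw [charpoly_mul_comm, ← Matrix.mul_assoc, hJ, Matrix.one_mul]
  calc M.charpoly = (M * P * Q).charpoly := by rw [Matrix.mul_assoc, hPQ, Matrix.mul_one]
    _ = (Q * (M * P)).charpoly := charpoly_mul_comm _ _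
    _ = _ := by rw [hQMP, charpoly_fromBlocks_zero₂₁, hconj]

theorem Matrix.charpoly_eq_mul_of_centrosymmetric {n : ℕ}
    (M : Matrix (Fin (n + n)) (Fin (n + n)) R) (hM : ∀ i j, M i.rev j.rev = M i j) :
    M.charpoly =
      (M.submatrix (Fin.castAdd n) (Fin.castAdd n) +
        M.submatrix (Fin.castAdd n) (Fin.rev ∘ Fin.castAdd n)).charpoly *
      (M.submatrix (Fin.castAdd n) (Fin.castAdd n) -
        M.submatrix (Fin.castAdd n) (Fin.rev ∘ Fin.castAdd n)).charpoly := by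
  set J : Matrix (Fin n) (Fin n) R := (Fin.revPerm : Equiv.Perm (Fin n)).permMatrix R
  have hJX (X : Matrix (Fin n) (Fin n) R) : J * X * J = X.submatrix Fin.rev Fin.rev := by
    simp [J, PEquiv.toMatrix_toPEquiv_mul, PEquiv.mul_toMatrix_toPEquiv]; rfl
  have hXJ (X : Matrix (Fin n) (Fin n) R) : X * J = X.submatrix id Fin.rev := by
    simp [J, PEquiv.mul_toMatrix_toPEquiv]; rfl
  have hJJ : J * J = 1 := by
    simpa [submatrix_one _ Fin.rev_injective] using hJX 1
  have hblocks : reindex finSumFinEquiv.symm finSumFinEquiv.symm M =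
      fromBlocks (M.submatrix (Fin.castAdd n) (Fin.castAdd n))
        (M.submatrix (Fin.castAdd n) (Fin.natAdd n))
        (J * M.submatrix (Fin.castAdd n) (Fin.natAdd n) * J)
        (J * M.submatrix (Fin.castAdd n) (Fin.castAdd n) * J) := by
    rw [hJX, hJX]
    ext (i | i) (j | j)
    · rfl
    · rfl
    all_goals
      simp only [reindex_apply, submatrix_apply, fromBlocks_apply₂₁, fromBlocks_apply₂₂,
        Equiv.symm_symm, finSumFinEquiv_apply_left, finSumFinEquiv_apply_right]
      rw [← hM]
      congr 1 <;> ext <;> simp <;> omega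
  have hBJ : M.submatrix (Fin.castAdd n) (Fin.natAdd n) * J =
      M.submatrix (Fin.castAdd n) (Fin.rev ∘ Fin.castAdd n) := by
    rw [hXJ]
    ext i j
    simp only [submatrix_apply, id, Function.comp_apply]
    congr 1; ext; simp; omega
  rw [← charpoly_reindex finSumFinEquiv.symm M, hblocks,
    charpoly_fromBlocks_of_mul_self_eq_one _ _ _ hJJ, hBJ]

end Centrosymmetric

/-- `A - B J` for the upper blocks `A`, `B` of `DC_n` (see `DCfun_sub_DCfun_rev`). -/
def skewFoldMat (R : Type*) [Ring R] (n : ℕ) : Matrix (Fin n) (Fin n) R :=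
  Matrix.of fun i j =>
    if (i : ℕ) + 3 ≤ n then (if (j : ℕ) = i + 1 then 1 else 0)
    else if (i : ℕ) + 2 = n then (if (j : ℕ) + 1 = n then 0 else -1)
    else 1

theorem skewFoldMat_map {R S : Type*} [Ring R] [Ring S] (f : R →+* S) (n : ℕ) :
    (skewFoldMat R n).map f = skewFoldMat S n := by
  ext i j
  simp only [skewFoldMat, map_apply, of_apply]
  split_ifs <;> simp

section SkewFold

variable {R : Type*} [Ring R] {m : ℕ} (v : Fin (m + 2) → R)

theorem skewFoldMat_mulVec_of_lt {i : ℕ} (hi : i < m) :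
    (skewFoldMat R (m + 2) *ᵥ v) ⟨i, by omega⟩ = v ⟨i + 1, by omega⟩ := by
  rw [mulVec, dotProduct, Finset.sum_eq_single ⟨i + 1, by omega⟩]
  · rw [skewFoldMat, of_apply, if_pos (by simp only; omega), if_pos rfl, one_mul]
  · intro j _ hj
    rw [skewFoldMat, of_apply, if_pos (by simp only; omega), if_neg (fun h => hj (Fin.ext h)),
      zero_mul]
  · simp

theorem skewFoldMat_mulVec_penultimate :
    (skewFoldMat R (m + 2) *ᵥ v) ⟨m, by omega⟩ = v (Fin.last (m + 1)) - ∑ j, v j := by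
  have hk (k : Fin (m + 1)) : (k : ℕ) ≠ m + 1 := by omega
  rw [mulVec, dotProduct, Fin.sum_univ_castSucc, Fin.sum_univ_castSucc v]
  simp [skewFoldMat, hk]

theorem skewFoldMat_mulVec_last :
    (skewFoldMat R (m + 2) *ᵥ v) (Fin.last (m + 1)) = ∑ j, v j := by
  simp [mulVec, dotProduct, skewFoldMat]

end SkewFold

theorem pow_eq_one_of_skewFoldMat_mulVec_eq_smul {F : Type*} [Field F] {m : ℕ}
    {v : Fin (m + 2) → F} {z : F} (hv : v ≠ 0) (h : skewFoldMat F (m + 2) *ᵥ v = z • v) :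
    z ^ (m + 2) = 1 := by
  have hrow (i : Fin (m + 2)) : (skewFoldMat F (m + 2) *ᵥ v) i = z * v i := by rw [h]; rfl
  have hgeom (k : ℕ) (hk : k ≤ m) : v ⟨k, by omega⟩ = z ^ k * v 0 := by
    induction k with
    | zero => simp
    | succ k ih =>
      rw [← skewFoldMat_mulVec_of_lt v (by omega : k < m), hrow, ih (by omega), pow_succ]
      ring
  have hsum : ∑ j, v j = (∑ k ∈ Finset.range (m + 1), z ^ k) * v 0 + v (Fin.last (m + 1)) := by
    rw [Fin.sum_univ_castSucc, Finset.sum_mul, ← Fin.sum_univ_eq_sum_range (fun k => z ^ k * v 0)]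
    congr 1
    exact Finset.sum_congr rfl fun k _ => hgeom k (by omega)
  have hpen := skewFoldMat_mulVec_penultimate v
  rw [hrow, hgeom m le_rfl] at hpen
  have hlast := skewFoldMat_mulVec_last v
  rw [hrow] at hlast
  by_cases h0 : v 0 = 0
  · have hvlast : v (Fin.last (m + 1)) ≠ 0 := by
      refine fun hl => hv (funext fun j => ?_)
      induction j using Fin.lastCases with
      | last => exact hl
      | cast k =>
        rw [Pi.zero_apply, ← mul_zero (z ^ (k : ℕ)), ← h0]
        exact hgeom k (by omega)
    rw [hsum, h0, mul_zero, zero_add] at hlast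
    rw [mul_left_eq_self₀.mp hlast |>.resolve_right hvlast, one_pow]
  · have hgeomSum : ∑ k ∈ Finset.range (m + 2), z ^ k = 0 := by
      refine (mul_eq_zero.mp ?_).resolve_right h0
      rw [Finset.sum_range_succ]
      linear_combination hpen - hsum
    rw [← sub_eq_zero, ← geom_sum_mul, hgeomSum, zero_mul]

theorem norm_eq_one_of_mem_spectrum_skewFoldMat {n : ℕ} (hn : 2 ≤ n) {z : ℂ}
    (hz : z ∈ spectrum ℂ (skewFoldMat ℂ n)) : ‖z‖ = 1 := by
  obtain ⟨m, rfl⟩ : ∃ m, n = m + 2 := ⟨n - 2, by omega⟩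
  obtain ⟨v, hv, h⟩ := exists_mulVec_eq_smul_of_mem_spectrum hz
  exact Complex.norm_eq_one_of_pow_eq_one (pow_eq_one_of_skewFoldMat_mulVec_eq_smul hv h)
    (by omega)

/- In the row computations below `n = m + 3`, so that the rows `n - 3`, `n - 2`, `n - 1` of the
definitions are the rows `m`, `m + 1`, `m + 2` and no truncated subtraction is left in them. -/

section CompactedRows

variable {m : ℕ}

theorem Cfun_of_lt {i : ℕ} (hi : i < m) (j : ℕ) :
    Cfun (m + 3) i j = if j = i + 1 then 1 else 0 := by
  by_cases hj : j = i + 1 <;>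
    simp (disch := omega) only [Cfun, hj, if_pos, if_neg, and_true, and_false, if_true, if_false]

theorem Cfun_m (j : ℕ) : Cfun (m + 3) m j = if j = m + 1 ∨ j = m + 2 then 1 else 0 := by
  simp +arith [Cfun]

theorem Cfun_m_add_one (j : ℕ) :
    Cfun (m + 3) (m + 1) j = if j ≤ m + 2 then (m : ℝ) + 1 else (m : ℝ) + 2 := by
  by_cases hj : j ≤ m + 2 <;> simp +arith [Cfun, hj] <;> grind

theorem Cfun_m_add_two (j : ℕ) : Cfun (m + 3) (m + 2) j = 1 := by
  simp +arith [Cfun]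

theorem Cfun_m_add_three (j : ℕ) :
    Cfun (m + 3) (m + 3) j = if j ≤ m + 1 then (m : ℝ) + 2 else (m : ℝ) + 1 := by
  by_cases hj : j ≤ m + 1 <;> simp +arith [Cfun, hj] <;> grind

theorem Cfun_m_add_four (j : ℕ) :
    Cfun (m + 3) (m + 4) j = if j = m + 2 ∨ j = m + 3 then 1 else 0 := by
  simp +arith [Cfun]

theorem Cfun_of_add_five_le {i : ℕ} (hi : m + 5 ≤ i) (j : ℕ) :
    Cfun (m + 3) i j = if j + 1 = i then 1 else 0 := by
  by_cases hj : j + 1 = i <;>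
    simp (disch := omega) only [Cfun, hj, if_pos, if_neg, and_true, and_false, if_true, if_false]

theorem Cfun_rev_rev {i : ℕ} (hi : i ≤ 2 * (m + 3) - 2) (j : ℕ) :
    Cfun (m + 3) (2 * (m + 3) - 2 - i) (2 * (m + 3) - 2 - j) = Cfun (m + 3) i j := by
  obtain hi | rfl | rfl | rfl | rfl | rfl | hi :
      i < m ∨ m = i ∨ m + 1 = i ∨ m + 2 = i ∨ m + 3 = i ∨ m + 4 = i ∨ m + 5 ≤ i := by omega
  · rw [Cfun_of_add_five_le (by omega), Cfun_of_lt hi]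
    split_ifs <;> first | rfl | omega
  · rw [show 2 * (m + 3) - 2 - m = m + 4 by omega, Cfun_m_add_four, Cfun_m]
    split_ifs <;> first | rfl | omega
  · rw [show 2 * (m + 3) - 2 - (m + 1) = m + 3 by omega, Cfun_m_add_three, Cfun_m_add_one]
    split_ifs <;> first | rfl | omega
  · rw [show 2 * (m + 3) - 2 - (m + 2) = m + 2 by omega, Cfun_m_add_two, Cfun_m_add_two]
  · rw [show 2 * (m + 3) - 2 - (m + 3) = m + 1 by omega, Cfun_m_add_three, Cfun_m_add_one]
    split_ifs <;> first | rfl | omega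
  · rw [show 2 * (m + 3) - 2 - (m + 4) = m by omega, Cfun_m_add_four, Cfun_m]
    split_ifs <;> first | rfl | omega
  · rw [Cfun_of_add_five_le hi, Cfun_of_lt (by omega)]
    split_ifs <;> first | rfl | omega

theorem SCfun_of_lt {i : ℕ} (hi : i < m) (j : ℕ) :
    SCfun (m + 3) i j = if j = i + 1 then 1 else 0 := by
  by_cases hj : j = i + 1 <;>
    simp (disch := omega) only [SCfun, hj, if_pos, if_neg, and_true, and_false, if_true, if_false]

theorem SCfun_m (j : ℕ) :
    SCfun (m + 3) m j = if j = m + 1 then 1 else if j = m + 2 then 2 else 0 := by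
  by_cases hj : j = m + 1 <;> by_cases hj' : j = m + 2 <;> simp +arith [SCfun, hj, hj']

theorem SCfun_m_add_one {j : ℕ} (hj : j < m + 3) :
    SCfun (m + 3) (m + 1) j = if j ≤ m + 1 then 2 * (m : ℝ) + 3 else 2 * (m : ℝ) + 2 := by
  by_cases hj' : j ≤ m + 1 <;> simp +arith [SCfun, hj'] <;> grind

theorem SCfun_m_add_two (j : ℕ) : SCfun (m + 3) (m + 2) j = 1 := by
  simp +arith [SCfun]

end CompactedRows

/-- Outside its two middle rows, `DC_n` is `C_n` with the middle column doubled: `mergeMiddle n`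
sends both middle indices `n - 1`, `n` of `DC_n` to the middle index `n - 1` of `C_n`. -/
def mergeMiddle (n k : ℕ) : ℕ := if k < n then k else k - 1

theorem mergeMiddle_of_lt {n k : ℕ} (hk : k < n) : mergeMiddle n k = k := if_pos hk

theorem mergeMiddle_le {n k : ℕ} (hk : k < 2 * n) : mergeMiddle n k ≤ 2 * n - 2 := by
  unfold mergeMiddle; split_ifs <;> omega

theorem mergeMiddle_rev {n k : ℕ} (hk : k < 2 * n) :
    mergeMiddle n (2 * n - 1 - k) = 2 * n - 2 - mergeMiddle n k := by
  unfold mergeMiddle; split_ifs <;> omega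

theorem DCfun_eq_Cfun {n i : ℕ} (hi : i + 1 ≠ n) (hi' : i ≠ n) (j : ℕ) :
    DCfun n i j = Cfun n (mergeMiddle n i) (mergeMiddle n j) := by
  unfold DCfun mergeMiddle
  rw [if_neg (by omega : ¬i = n - 1), if_neg hi']
  split_ifs <;> first | rfl | omega

theorem DCfun_of_add_two_le {n i j : ℕ} (hi : i + 2 ≤ n) (hj : j < n) :
    DCfun n i j = Cfun n i j := by
  rw [DCfun_eq_Cfun (by omega) (by omega), mergeMiddle_of_lt hj, mergeMiddle_of_lt (by omega)]

theorem DCfun_rev_of_add_two_le {n i j : ℕ} (hi : i + 2 ≤ n) (hj : j < n) :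
    DCfun n i (2 * n - 1 - j) = Cfun n i (2 * n - 2 - j) := by
  rw [DCfun_eq_Cfun (by omega) (by omega), mergeMiddle_rev (by omega), mergeMiddle_of_lt hj,
    mergeMiddle_of_lt (by omega)]

theorem DCfun_of_add_one_eq {n i : ℕ} (hi : i + 1 = n) (j : ℕ) :
    DCfun n i j = if j < n then 1 else 0 := by
  unfold DCfun
  rw [if_neg (by omega), if_pos (by omega)]
  split_ifs <;> first | rfl | omega

theorem DCfun_self {n : ℕ} (hn : n ≠ 0) (j : ℕ) : DCfun n n j = if j < n then 0 else 1 := by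
  unfold DCfun
  rw [if_neg (by omega), if_neg (by omega), if_pos rfl]
  split_ifs <;> first | rfl | omega

section DividedRows

variable {m : ℕ}

theorem DCfun_rev_rev {i j : ℕ} (hi : i < 2 * (m + 3)) (hj : j < 2 * (m + 3)) :
    DCfun (m + 3) (2 * (m + 3) - 1 - i) (2 * (m + 3) - 1 - j) = DCfun (m + 3) i j := by
  obtain rfl | rfl | hi' : i = m + 2 ∨ i = m + 3 ∨ (i + 1 ≠ m + 3 ∧ i ≠ m + 3) := by omega
  · rw [show 2 * (m + 3) - 1 - (m + 2) = m + 3 by omega, DCfun_self (by omega),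
      DCfun_of_add_one_eq rfl]
    split_ifs <;> first | rfl | omega
  · rw [show 2 * (m + 3) - 1 - (m + 3) = m + 2 by omega, DCfun_self (by omega),
      DCfun_of_add_one_eq rfl]
    split_ifs <;> first | rfl | omega
  · rw [DCfun_eq_Cfun (by omega) (by omega), DCfun_eq_Cfun hi'.1 hi'.2, mergeMiddle_rev hi,
      mergeMiddle_rev hj, Cfun_rev_rev (mergeMiddle_le hi)]

theorem DCfun_add_DCfun_rev {i j : ℕ} (hi : i < m + 3) (hj : j < m + 3) :
    DCfun (m + 3) i j + DCfun (m + 3) i (2 * (m + 3) - 1 - j) = SCfun (m + 3) i j := by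
  obtain hi | rfl | rfl | rfl : i < m ∨ m = i ∨ m + 1 = i ∨ m + 2 = i := by omega
  · rw [DCfun_of_add_two_le (by omega) hj, DCfun_rev_of_add_two_le (by omega) hj,
      Cfun_of_lt hi, Cfun_of_lt hi, SCfun_of_lt hi]
    split_ifs <;> first | omega | norm_num
  · rw [DCfun_of_add_two_le (by omega) hj, DCfun_rev_of_add_two_le (by omega) hj,
      Cfun_m, Cfun_m, SCfun_m]
    split_ifs <;> first | omega | norm_num
  · rw [DCfun_of_add_two_le (by omega) hj, DCfun_rev_of_add_two_le (by omega) hj,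
      Cfun_m_add_one, Cfun_m_add_one, SCfun_m_add_one hj]
    split_ifs <;> first | omega | ring
  · rw [DCfun_of_add_one_eq rfl, DCfun_of_add_one_eq rfl, SCfun_m_add_two, if_pos hj,
      if_neg (by omega), add_zero]

theorem DCfun_sub_DCfun_rev {i j : ℕ} (hi : i < m + 3) (hj : j < m + 3) :
    DCfun (m + 3) i j - DCfun (m + 3) i (2 * (m + 3) - 1 - j) =
      skewFoldMat ℝ (m + 3) ⟨i, hi⟩ ⟨j, hj⟩ := by
  simp only [skewFoldMat, of_apply]
  obtain hi | rfl | rfl | rfl : i < m ∨ m = i ∨ m + 1 = i ∨ m + 2 = i := by omega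
  · rw [DCfun_of_add_two_le (by omega) hj, DCfun_rev_of_add_two_le (by omega) hj,
      Cfun_of_lt hi, Cfun_of_lt hi]
    split_ifs <;> first | omega | norm_num
  · rw [DCfun_of_add_two_le (by omega) hj, DCfun_rev_of_add_two_le (by omega) hj,
      Cfun_m, Cfun_m]
    split_ifs <;> first | omega | norm_num
  · rw [DCfun_of_add_two_le (by omega) hj, DCfun_rev_of_add_two_le (by omega) hj,
      Cfun_m_add_one, Cfun_m_add_one]
    split_ifs <;> first | omega | ring
  · rw [DCfun_of_add_one_eq rfl, DCfun_of_add_one_eq rfl, if_pos hj, if_neg (by omega),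
      if_neg (by omega), if_neg (by omega), sub_zero]

end DividedRows

theorem SCmat_trace (m : ℕ) : (SCmat (m + 3)).trace = 2 * m + 4 := by
  change ∑ i : Fin (m + 3), SCfun (m + 3) i i = _
  rw [Fin.sum_univ_eq_sum_range (fun k => SCfun (m + 3) k k), Finset.sum_range_succ,
    Finset.sum_range_succ, Finset.sum_range_succ, Finset.sum_eq_zero, SCfun_m,
    SCfun_m_add_one (by omega), SCfun_m_add_two, if_neg (by omega), if_neg (by omega),
    if_pos le_rfl]
  · ring
  · intro k hk
    rw [SCfun_of_lt (Finset.mem_range.mp hk), if_neg (by omega)]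

theorem exists_one_le_norm_mem_spectrum_SCmat (m : ℕ) :
    ∃ z ∈ spectrum ℂ ((SCmat (m + 3)).map (algebraMap ℝ ℂ)), 1 ≤ ‖z‖ := by
  apply exists_mem_spectrum_le_norm_of_mul_lt_norm_trace
  rw [← AddMonoidHom.map_trace, SCmat_trace, Fintype.card_fin, Complex.coe_algebraMap,
    Complex.norm_real, Real.norm_of_nonneg (by positivity)]
  push_cast
  linarith

theorem charpoly_DCmat (m : ℕ) :
    (DCmat (m + 3)).charpoly = (SCmat (m + 3)).charpoly * (skewFoldMat ℝ (m + 3)).charpoly := by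
  set e : Fin (2 * (m + 3)) ≃ Fin ((m + 3) + (m + 3)) := finCongr (two_mul _)
  have he (i j) : reindex e e (DCmat (m + 3)) i j = DCfun (m + 3) i j := rfl
  rw [← charpoly_reindex e, charpoly_eq_mul_of_centrosymmetric]
  · have hrev (j : Fin (m + 3)) :
        ((Fin.castAdd (m + 3) j).rev : ℕ) = 2 * (m + 3) - 1 - j := by
      simp only [Fin.val_rev, Fin.val_castAdd]; omega
    congr 2 <;> ext i j <;>
      simp only [Matrix.add_apply, Matrix.sub_apply, submatrix_apply, Function.comp_apply, he, hrev,
        Fin.val_castAdd]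
    · exact DCfun_add_DCfun_rev i.2 j.2
    · exact DCfun_sub_DCfun_rev i.2 j.2
  · intro i j
    have hrev (k : Fin ((m + 3) + (m + 3))) : (k.rev : ℕ) = 2 * (m + 3) - 1 - k := by
      simp only [Fin.val_rev]; omega
    rw [he, he, hrev, hrev]
    exact DCfun_rev_rev (by omega) (by omega)

theorem stmt8 (n : ℕ) (hn : 3 ≤ n) :
    specRad (DCmat n) = specRad (SCmat n) := by
  obtain ⟨m, rfl⟩ : ∃ m, n = m + 3 := ⟨n - 3, by omega⟩
  refine specRad_eq_of_charpoly_eq_mul (charpoly_DCmat m) (exists_one_le_norm_mem_spectrum_SCmat m)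
    fun w hw => ?_
  rw [skewFoldMat_map] at hw
  exact (norm_eq_one_of_mem_spectrum_skewFoldMat (by omega) hw).le
end

section
/- For every integer n ≥ 3, max{ρ(C_n), 1} = max{ρ(SC_n), 1}, where ρ denotes spectral radius, C_n is the compacted matrix of rank n and SC_n is the super compacted matrix of rank n. -/
/-!
Index the rows of `C_{m+3}` from `0` to `2m+4`. The matrix commutes with the reflection
`i ↦ 2m+4-i`, so eigenvectors split into mirror-symmetric and antisymmetric ones. Folding a vector,
`v_i = w_i + w_{2m+4-i}`, carries eigenvectors of `C` to eigenvectors of `SC`, and the symmetric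
extension carries eigenvectors of `SC` back; hence `spec SC ⊆ spec C`, and an eigenvalue of `C`
outside `spec SC` has an eigenvector with vanishing fold, i.e. an antisymmetric one. For such a
vector the shift rows give `w_t = μ^t w_0`, and row `m+1` then gives
`(1 + μ + ⋯ + μ^{m+2}) w_0 = 0`, so `μ` is a root of unity. Eigenvalues of modulus one do not
change `max ρ 1`.
-/

open Finset

-- Vectors indexed by `ℕ` rather than `Fin N` keep the reflected indices `2m+4-i` free of casts.
def natMulVec (N : ℕ) (f : ℕ → ℕ → ℝ) (w : ℕ → ℂ) (i : ℕ) : ℂ :=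
  ∑ j ∈ range N, (f i j : ℂ) * w j

lemma mulVec_map_of_eq_natMulVec {N : ℕ} (f : ℕ → ℕ → ℝ) (w : ℕ → ℂ) (i : Fin N) :
    ((Matrix.of fun i j : Fin N => f i j).map (algebraMap ℝ ℂ)).mulVec (fun j => w j) i =
      natMulVec N f w i := by
  simp [Matrix.mulVec, dotProduct, natMulVec, ← Fin.sum_univ_eq_sum_range]

lemma mem_spectrum_map_of_iff {N : ℕ} (f : ℕ → ℕ → ℝ) (μ : ℂ) :
    μ ∈ spectrum ℂ ((Matrix.of fun i j : Fin N => f i j).map (algebraMap ℝ ℂ)) ↔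
      ∃ w : ℕ → ℂ, (∃ i < N, w i ≠ 0) ∧ ∀ i < N, natMulVec N f w i = μ * w i := by
  rw [← Matrix.spectrum_toLin', ← Module.End.hasEigenvalue_iff_mem_spectrum]
  constructor
  · intro hμ
    obtain ⟨v, hv⟩ := hμ.exists_hasEigenvector
    set w : ℕ → ℂ := fun t => if h : t < N then v ⟨t, h⟩ else 0
    have hvw : v = fun j : Fin N => w j := by funext j; simp [w]
    obtain ⟨i, hi⟩ := Function.ne_iff.mp hv.2
    refine ⟨w, ⟨i, i.isLt, by simpa [w] using hi⟩, fun i hi => ?_⟩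
    have := congrFun hv.apply_eq_smul ⟨i, hi⟩
    rw [hvw, Matrix.toLin'_apply, mulVec_map_of_eq_natMulVec] at this
    simpa [w, hi] using this
  · rintro ⟨w, ⟨i, hi, hwi⟩, hw⟩
    refine Module.End.hasEigenvalue_of_hasEigenvector (x := fun j : Fin N => w j) ⟨?_, ?_⟩
    · rw [Module.End.mem_eigenspace_iff, Matrix.toLin'_apply]
      funext j
      exact (mulVec_map_of_eq_natMulVec f w j).trans (hw j j.isLt)
    · exact Function.ne_iff.mpr ⟨⟨i, hi⟩, hwi⟩

lemma norm_le_specRad {ι : Type*} [Fintype ι] [DecidableEq ι] (A : Matrix ι ι ℝ) {z : ℂ}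
    (hz : z ∈ spectrum ℂ (A.map (algebraMap ℝ ℂ))) : ‖z‖ ≤ specRad A :=
  le_csSup ((Matrix.finite_spectrum _).image _).bddAbove ⟨z, hz, rfl⟩

lemma max_specRad_one_le {ι κ : Type*} [Fintype ι] [DecidableEq ι] [Fintype κ] [DecidableEq κ]
    {A : Matrix ι ι ℝ} {B : Matrix κ κ ℝ}
    (h : ∀ z ∈ spectrum ℂ (A.map (algebraMap ℝ ℂ)),
      z ∈ spectrum ℂ (B.map (algebraMap ℝ ℂ)) ∨ ‖z‖ ≤ 1) :
    max (specRad A) 1 ≤ max (specRad B) 1 := by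
  refine max_le (Real.sSup_le ?_ (by positivity)) (le_max_right _ _)
  rintro _ ⟨z, hz, rfl⟩
  rcases h z hz with hB | h1
  · exact (norm_le_specRad B hB).trans (le_max_left _ _)
  · exact h1.trans (le_max_right _ _)

lemma norm_eq_one_of_geom_sum_eq_zero {μ : ℂ} {k : ℕ} (hk : k ≠ 0)
    (h : ∑ t ∈ range k, μ ^ t = 0) : ‖μ‖ = 1 := by
  refine Complex.norm_eq_one_of_pow_eq_one ?_ hk
  have := geom_sum_mul μ k
  rw [h, zero_mul] at this
  linear_combination -this

lemma sum_Ico_eq_sum_range_reflect (m : ℕ) (f : ℕ → ℂ) :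
    ∑ j ∈ Ico (m + 3) (2 * m + 5), f j = ∑ t ∈ range (m + 2), f (2 * m + 4 - t) := by
  rw [sum_Ico_eq_sum_range, show 2 * m + 5 - (m + 3) = m + 2 by omega,
    ← sum_range_reflect (fun t => f (m + 3 + t)) (m + 2)]
  refine sum_congr rfl fun j hj => ?_
  have := mem_range.mp hj
  congr 1
  omega

lemma sum_range_two_mul_add_five (m : ℕ) (f : ℕ → ℂ) :
    ∑ j ∈ range (2 * m + 5), f j =
      ∑ j ∈ range (m + 2), f j + f (m + 2) + ∑ j ∈ Ico (m + 3) (2 * m + 5), f j := by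
  rw [← sum_range_succ, sum_range_add_sum_Ico _ (by omega)]

lemma sum_range_ite_mul {N b : ℕ} (hb : b < N) (a : ℂ) (w : ℕ → ℂ) :
    ∑ j ∈ range N, (if j = b then a else 0) * w j = a * w b := by
  simp [ite_mul, hb]

lemma sum_range_ite_add_ite_mul {N b b' : ℕ} (hb : b < N) (hb' : b' < N) (a a' : ℂ)
    (w : ℕ → ℂ) :
    ∑ j ∈ range N, ((if j = b then a else 0) + (if j = b' then a' else 0)) * w j =
      a * w b + a' * w b' := by
  simp only [add_mul, sum_add_distrib, sum_range_ite_mul hb, sum_range_ite_mul hb']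

lemma sum_range_two_mul_add_five_block_mul (m : ℕ) (a b d : ℂ) (w : ℕ → ℂ) :
    ∑ j ∈ range (2 * m + 5), (if j < m + 2 then a else if j = m + 2 then b else d) * w j =
      a * ∑ j ∈ range (m + 2), w j + b * w (m + 2) + d * ∑ j ∈ Ico (m + 3) (2 * m + 5), w j := by
  rw [sum_range_two_mul_add_five, mul_sum, mul_sum, if_neg (by omega), if_pos rfl]
  congr 1
  · congr 1
    refine sum_congr rfl fun j hj => ?_
    rw [if_pos (mem_range.mp hj)]
  · refine sum_congr rfl fun j hj => ?_
    have := (mem_Ico.mp hj).1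
    rw [if_neg (by omega), if_neg (by omega)]

section Rows

variable (m : ℕ) (w : ℕ → ℂ)

lemma natMulVec_C_of_lt {i : ℕ} (hi : i < m) :
    natMulVec (2 * m + 5) (Cfun (m + 3)) w i = w (i + 1) := by
  rw [natMulVec, ← one_mul (w (i + 1)), ← sum_range_ite_mul (by omega : i + 1 < 2 * m + 5)]
  refine sum_congr rfl fun j _ => ?_
  unfold Cfun
  split_ifs <;> first | rfl | omega

lemma natMulVec_C_m :
    natMulVec (2 * m + 5) (Cfun (m + 3)) w m = w (m + 1) + w (m + 2) := by
  rw [natMulVec, ← one_mul (w (m + 1)), ← one_mul (w (m + 2)),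
    ← sum_range_ite_add_ite_mul (by omega : m + 1 < 2 * m + 5) (by omega : m + 2 < 2 * m + 5)]
  refine sum_congr rfl fun j _ => ?_
  unfold Cfun
  split_ifs <;> first | rfl | omega | (push_cast; ring)

lemma natMulVec_C_m_add_one :
    natMulVec (2 * m + 5) (Cfun (m + 3)) w (m + 1) =
      (m + 1) * ∑ j ∈ range (m + 2), w j + (m + 1) * w (m + 2) +
        (m + 2) * ∑ j ∈ Ico (m + 3) (2 * m + 5), w j := by
  rw [natMulVec, ← sum_range_two_mul_add_five_block_mul]
  refine sum_congr rfl fun j _ => ?_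
  unfold Cfun
  split_ifs <;> first | rfl | omega | (push_cast; ring)

lemma natMulVec_C_m_add_two :
    natMulVec (2 * m + 5) (Cfun (m + 3)) w (m + 2) = ∑ j ∈ range (2 * m + 5), w j := by
  refine sum_congr rfl fun j _ => ?_
  unfold Cfun
  split_ifs <;> first | omega | simp

lemma natMulVec_C_m_add_three :
    natMulVec (2 * m + 5) (Cfun (m + 3)) w (m + 3) =
      (m + 2) * ∑ j ∈ range (m + 2), w j + (m + 1) * w (m + 2) +
        (m + 1) * ∑ j ∈ Ico (m + 3) (2 * m + 5), w j := by
  rw [natMulVec, ← sum_range_two_mul_add_five_block_mul]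
  refine sum_congr rfl fun j _ => ?_
  unfold Cfun
  split_ifs <;> first | rfl | omega | (push_cast; ring)

lemma natMulVec_C_m_add_four :
    natMulVec (2 * m + 5) (Cfun (m + 3)) w (m + 4) = w (m + 2) + w (m + 3) := by
  rw [natMulVec, ← one_mul (w (m + 2)), ← one_mul (w (m + 3)),
    ← sum_range_ite_add_ite_mul (by omega : m + 2 < 2 * m + 5) (by omega : m + 3 < 2 * m + 5)]
  refine sum_congr rfl fun j _ => ?_
  unfold Cfun
  split_ifs <;> first | rfl | omega | (push_cast; ring)

lemma natMulVec_C_of_add_five_le {i : ℕ} (hi : m + 5 ≤ i) (hi' : i < 2 * m + 5) :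
    natMulVec (2 * m + 5) (Cfun (m + 3)) w i = w (i - 1) := by
  rw [natMulVec, ← one_mul (w (i - 1)), ← sum_range_ite_mul (by omega : i - 1 < 2 * m + 5)]
  refine sum_congr rfl fun j _ => ?_
  unfold Cfun
  split_ifs <;> first | rfl | omega

lemma natMulVec_SC_of_lt {i : ℕ} (hi : i < m) :
    natMulVec (m + 3) (SCfun (m + 3)) w i = w (i + 1) := by
  rw [natMulVec, ← one_mul (w (i + 1)), ← sum_range_ite_mul (by omega : i + 1 < m + 3)]
  refine sum_congr rfl fun j _ => ?_
  unfold SCfun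
  split_ifs <;> first | rfl | omega

lemma natMulVec_SC_m :
    natMulVec (m + 3) (SCfun (m + 3)) w m = w (m + 1) + 2 * w (m + 2) := by
  rw [natMulVec, ← one_mul (w (m + 1)),
    ← sum_range_ite_add_ite_mul (by omega : m + 1 < m + 3) (by omega : m + 2 < m + 3)]
  refine sum_congr rfl fun j _ => ?_
  unfold SCfun
  split_ifs <;> first | rfl | omega | (push_cast; ring)

lemma natMulVec_SC_m_add_one :
    natMulVec (m + 3) (SCfun (m + 3)) w (m + 1) =
      (2 * m + 3) * ∑ j ∈ range (m + 2), w j + (2 * m + 2) * w (m + 2) := by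
  rw [natMulVec, sum_range_succ, mul_sum]
  congr 1
  · refine sum_congr rfl fun j hj => ?_
    have := mem_range.mp hj
    unfold SCfun
    split_ifs <;> first | rfl | omega | (push_cast; ring)
  · unfold SCfun
    split_ifs <;> first | rfl | omega | (push_cast; ring)

lemma natMulVec_SC_m_add_two :
    natMulVec (m + 3) (SCfun (m + 3)) w (m + 2) = ∑ j ∈ range (m + 3), w j := by
  refine sum_congr rfl fun j _ => ?_
  unfold SCfun
  split_ifs <;> first | omega | simp

end Rows

def foldMirror (m : ℕ) (w : ℕ → ℂ) (i : ℕ) : ℂ :=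
  if i ≤ m + 1 then w i + w (2 * m + 4 - i) else w i

-- A mirror-symmetric preimage of `2 • v` under `foldMirror m`.
def unfoldMirror (m : ℕ) (v : ℕ → ℂ) (i : ℕ) : ℂ :=
  if i ≤ m + 1 then v i else if i = m + 2 then 2 * v (m + 2) else v (2 * m + 4 - i)

section Mirror

variable (m : ℕ)

lemma foldMirror_of_le (w : ℕ → ℂ) {i : ℕ} (hi : i ≤ m + 1) :
    foldMirror m w i = w i + w (2 * m + 4 - i) :=
  if_pos hi

lemma foldMirror_m_add_two (w : ℕ → ℂ) : foldMirror m w (m + 2) = w (m + 2) :=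
  if_neg (by omega)

lemma unfoldMirror_of_le (v : ℕ → ℂ) {i : ℕ} (hi : i ≤ m + 1) : unfoldMirror m v i = v i :=
  if_pos hi

lemma unfoldMirror_m_add_two (v : ℕ → ℂ) : unfoldMirror m v (m + 2) = 2 * v (m + 2) := by
  simp [unfoldMirror]

lemma unfoldMirror_of_ge (v : ℕ → ℂ) {i : ℕ} (hi : m + 3 ≤ i) :
    unfoldMirror m v i = v (2 * m + 4 - i) := by
  rw [unfoldMirror, if_neg (by omega), if_neg (by omega)]

lemma foldMirror_eq_mul {g w : ℕ → ℂ} {μ : ℂ} (h : ∀ i < 2 * m + 5, g i = μ * w i) {i : ℕ}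
    (hi : i < m + 3) : foldMirror m g i = μ * foldMirror m w i := by
  unfold foldMirror
  split_ifs
  · rw [h i (by omega), h (2 * m + 4 - i) (by omega), mul_add]
  · exact h i (by omega)

lemma unfoldMirror_eq_mul {g v : ℕ → ℂ} {μ : ℂ} (h : ∀ i < m + 3, g i = μ * v i) {i : ℕ}
    (hi : i < 2 * m + 5) : unfoldMirror m g i = μ * unfoldMirror m v i := by
  unfold unfoldMirror
  split_ifs
  · exact h i (by omega)
  · rw [h (m + 2) (by omega)]; ring
  · exact h _ (by omega)

lemma sum_range_foldMirror (w : ℕ → ℂ) :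
    ∑ j ∈ range (m + 2), foldMirror m w j =
      ∑ j ∈ range (m + 2), w j + ∑ j ∈ Ico (m + 3) (2 * m + 5), w j := by
  rw [sum_Ico_eq_sum_range_reflect, ← sum_add_distrib]
  exact sum_congr rfl fun j hj => foldMirror_of_le m w (by have := mem_range.mp hj; omega)

lemma sum_range_unfoldMirror (v : ℕ → ℂ) :
    ∑ j ∈ range (m + 2), unfoldMirror m v j = ∑ j ∈ range (m + 2), v j :=
  sum_congr rfl fun j hj => unfoldMirror_of_le m v (by have := mem_range.mp hj; omega)

lemma sum_Ico_unfoldMirror (v : ℕ → ℂ) :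
    ∑ j ∈ Ico (m + 3) (2 * m + 5), unfoldMirror m v j = ∑ j ∈ range (m + 2), v j := by
  rw [sum_Ico_eq_sum_range_reflect]
  refine sum_congr rfl fun j hj => ?_
  have := mem_range.mp hj
  rw [unfoldMirror_of_ge m v (by omega), Nat.sub_sub_self (by omega)]

lemma natMulVec_SC_foldMirror (w : ℕ → ℂ) {i : ℕ} (hi : i < m + 3) :
    natMulVec (m + 3) (SCfun (m + 3)) (foldMirror m w) i =
      foldMirror m (natMulVec (2 * m + 5) (Cfun (m + 3)) w) i := by
  obtain hi | him | rfl | rfl : i < m ∨ i = m ∨ i = m + 1 ∨ i = m + 2 := by omega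
  · rw [natMulVec_SC_of_lt m _ hi, foldMirror_of_le m _ (by omega), foldMirror_of_le m _ (by omega),
      natMulVec_C_of_lt m w hi, natMulVec_C_of_add_five_le m w (by omega) (by omega),
      show 2 * m + 4 - i - 1 = 2 * m + 4 - (i + 1) by omega]
  · subst i
    rw [natMulVec_SC_m, foldMirror_of_le m _ le_rfl, foldMirror_m_add_two,
      foldMirror_of_le m _ (by omega), show 2 * m + 4 - m = m + 4 by omega,
      show 2 * m + 4 - (m + 1) = m + 3 by omega, natMulVec_C_m, natMulVec_C_m_add_four]
    ring
  · rw [natMulVec_SC_m_add_one, sum_range_foldMirror, foldMirror_m_add_two,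
      foldMirror_of_le m _ le_rfl, show 2 * m + 4 - (m + 1) = m + 3 by omega,
      natMulVec_C_m_add_one, natMulVec_C_m_add_three]
    ring
  · rw [natMulVec_SC_m_add_two, sum_range_succ, sum_range_foldMirror, foldMirror_m_add_two,
      foldMirror_m_add_two, natMulVec_C_m_add_two, sum_range_two_mul_add_five]
    ring

lemma natMulVec_C_unfoldMirror (v : ℕ → ℂ) {i : ℕ} (hi : i < 2 * m + 5) :
    natMulVec (2 * m + 5) (Cfun (m + 3)) (unfoldMirror m v) i =
      unfoldMirror m (natMulVec (m + 3) (SCfun (m + 3)) v) i := by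
  obtain hi' | him | rfl | rfl | rfl | rfl | hi' :
      i < m ∨ i = m ∨ i = m + 1 ∨ i = m + 2 ∨ i = m + 3 ∨ i = m + 4 ∨ m + 5 ≤ i := by omega
  · rw [natMulVec_C_of_lt m _ hi', unfoldMirror_of_le m _ (by omega),
      unfoldMirror_of_le m _ (by omega), natMulVec_SC_of_lt m v hi']
  · subst i
    rw [natMulVec_C_m, unfoldMirror_of_le m _ le_rfl, unfoldMirror_m_add_two,
      unfoldMirror_of_le m _ (by omega), natMulVec_SC_m]
  · rw [natMulVec_C_m_add_one, sum_range_unfoldMirror, sum_Ico_unfoldMirror,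
      unfoldMirror_m_add_two, unfoldMirror_of_le m _ le_rfl, natMulVec_SC_m_add_one]
    ring
  · rw [natMulVec_C_m_add_two, sum_range_two_mul_add_five, sum_range_unfoldMirror,
      sum_Ico_unfoldMirror, unfoldMirror_m_add_two, unfoldMirror_m_add_two,
      natMulVec_SC_m_add_two, sum_range_succ _ (m + 2)]
    ring
  · rw [natMulVec_C_m_add_three, sum_range_unfoldMirror, sum_Ico_unfoldMirror,
      unfoldMirror_m_add_two, unfoldMirror_of_ge m _ le_rfl,
      show 2 * m + 4 - (m + 3) = m + 1 by omega, natMulVec_SC_m_add_one]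
    ring
  · rw [natMulVec_C_m_add_four, unfoldMirror_m_add_two, unfoldMirror_of_ge m _ le_rfl,
      unfoldMirror_of_ge m _ (by omega), show 2 * m + 4 - (m + 3) = m + 1 by omega,
      show 2 * m + 4 - (m + 4) = m by omega, natMulVec_SC_m]
    ring
  · rw [natMulVec_C_of_add_five_le m _ hi' hi, unfoldMirror_of_ge m _ (by omega),
      unfoldMirror_of_ge m _ (by omega), natMulVec_SC_of_lt m v (by omega),
      show 2 * m + 4 - (i - 1) = 2 * m + 4 - i + 1 by omega]

end Mirror

lemma norm_eq_one_of_foldMirror_eq_zero (m : ℕ) {μ : ℂ} {w : ℕ → ℂ}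
    (hw0 : ∃ i < 2 * m + 5, w i ≠ 0)
    (hw : ∀ i < 2 * m + 5, natMulVec (2 * m + 5) (Cfun (m + 3)) w i = μ * w i)
    (hfold : ∀ i < m + 3, foldMirror m w i = 0) : ‖μ‖ = 1 := by
  have hmid : w (m + 2) = 0 := by
    simpa [foldMirror_m_add_two] using hfold (m + 2) (by omega)
  have hanti : ∀ i ≤ m + 1, w (2 * m + 4 - i) = -w i := fun i hi => by
    have := hfold i (by omega)
    rw [foldMirror_of_le m w hi] at this
    linear_combination this
  have hpow : ∀ t ≤ m + 1, w t = μ ^ t * w 0 := by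
    intro t
    induction t with
    | zero => simp
    | succ t ih =>
      intro ht
      have hstep : w (t + 1) = μ * w t := by
        obtain ht' | rfl : t < m ∨ t = m := by omega
        · rw [← hw t (by omega), natMulVec_C_of_lt m w ht']
        · rw [← hw t (by omega), natMulVec_C_m, hmid, add_zero]
      rw [hstep, ih (by omega), pow_succ]
      ring
  have hw00 : w 0 ≠ 0 := by
    obtain ⟨i, hi, hwi⟩ := hw0
    contrapose! hwi
    obtain hi' | rfl | hi' : i ≤ m + 1 ∨ i = m + 2 ∨ m + 3 ≤ i := by omega
    · rw [hpow i hi', hwi, mul_zero]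
    · exact hmid
    · rw [← Nat.sub_sub_self (by omega : i ≤ 2 * m + 4), hanti _ (by omega),
        hpow _ (by omega), hwi, mul_zero, neg_zero]
  have hright : ∑ j ∈ Ico (m + 3) (2 * m + 5), w j = -∑ j ∈ range (m + 2), w j := by
    rw [sum_Ico_eq_sum_range_reflect, ← sum_neg_distrib]
    exact sum_congr rfl fun t ht => hanti t (by have := mem_range.mp ht; omega)
  have hleft : ∑ j ∈ range (m + 2), w j = (∑ t ∈ range (m + 2), μ ^ t) * w 0 := by
    rw [sum_mul]
    exact sum_congr rfl fun t ht => hpow t (by have := mem_range.mp ht; omega)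
  have hrow := hw (m + 1) (by omega)
  rw [natMulVec_C_m_add_one, hmid, hright, hleft, hpow (m + 1) le_rfl] at hrow
  have hgeom : (∑ t ∈ range (m + 3), μ ^ t) * w 0 = 0 := by
    rw [sum_range_succ _ (m + 2)]
    linear_combination -hrow
  exact norm_eq_one_of_geom_sum_eq_zero (by omega) ((mul_eq_zero.mp hgeom).resolve_right hw00)

lemma mem_spectrum_C_iff (m : ℕ) (μ : ℂ) :
    μ ∈ spectrum ℂ ((Cmat (m + 3)).map (algebraMap ℝ ℂ)) ↔
      ∃ w : ℕ → ℂ, (∃ i < 2 * m + 5, w i ≠ 0) ∧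
        ∀ i < 2 * m + 5, natMulVec (2 * m + 5) (Cfun (m + 3)) w i = μ * w i := by
  rw [Cmat, mem_spectrum_map_of_iff, show 2 * (m + 3) - 1 = 2 * m + 5 by omega]

lemma mem_spectrum_SC_iff (m : ℕ) (μ : ℂ) :
    μ ∈ spectrum ℂ ((SCmat (m + 3)).map (algebraMap ℝ ℂ)) ↔
      ∃ v : ℕ → ℂ, (∃ i < m + 3, v i ≠ 0) ∧
        ∀ i < m + 3, natMulVec (m + 3) (SCfun (m + 3)) v i = μ * v i := by
  rw [SCmat, mem_spectrum_map_of_iff]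

lemma spectrum_SC_subset_C (m : ℕ) :
    spectrum ℂ ((SCmat (m + 3)).map (algebraMap ℝ ℂ)) ⊆
      spectrum ℂ ((Cmat (m + 3)).map (algebraMap ℝ ℂ)) := by
  intro μ hμ
  obtain ⟨v, ⟨i, hi, hvi⟩, hv⟩ := (mem_spectrum_SC_iff m μ).mp hμ
  refine (mem_spectrum_C_iff m μ).mpr ⟨unfoldMirror m v, ⟨i, by omega, ?_⟩, fun j hj => ?_⟩
  · obtain hi' | rfl : i ≤ m + 1 ∨ i = m + 2 := by omega
    · rwa [unfoldMirror_of_le m v hi']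
    · rw [unfoldMirror_m_add_two]
      exact mul_ne_zero two_ne_zero hvi
  · rw [natMulVec_C_unfoldMirror m v hj]
    exact unfoldMirror_eq_mul m hv hj

lemma mem_spectrum_SC_or_norm_eq_one (m : ℕ) {μ : ℂ}
    (hμ : μ ∈ spectrum ℂ ((Cmat (m + 3)).map (algebraMap ℝ ℂ))) :
    μ ∈ spectrum ℂ ((SCmat (m + 3)).map (algebraMap ℝ ℂ)) ∨ ‖μ‖ = 1 := by
  obtain ⟨w, hw0, hw⟩ := (mem_spectrum_C_iff m μ).mp hμ
  by_cases hfold : ∀ i < m + 3, foldMirror m w i = 0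
  · exact Or.inr (norm_eq_one_of_foldMirror_eq_zero m hw0 hw hfold)
  · push Not at hfold
    refine Or.inl ((mem_spectrum_SC_iff m μ).mpr ⟨foldMirror m w, hfold, fun i hi => ?_⟩)
    rw [natMulVec_SC_foldMirror m w hi]
    exact foldMirror_eq_mul m hw hi

theorem stmt9 (n : ℕ) (hn : 3 ≤ n) :
    max (specRad (Cmat n)) 1 = max (specRad (SCmat n)) 1 := by
  obtain ⟨m, rfl⟩ : ∃ m, n = m + 3 := ⟨n - 3, by omega⟩
  refine le_antisymm (max_specRad_one_le fun z hz => ?_)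
    (max_specRad_one_le fun z hz => Or.inl (spectrum_SC_subset_C m hz))
  exact (mem_spectrum_SC_or_norm_eq_one m hz).imp_right le_of_eq
end

section
/- For every integer n ≥ 3, the spectral radius of the compacted matrix C_n is the unique real root larger than 1 of the polynomial Q_n(x) = x^n − 2(n−1)·Σ_{j=1}^{n−1} x^j + 1; in particular ρ(C_n) > 1 and Q_n(ρ(C_n)) = 0. -/
open Polynomial in
/-- The polynomial `Q_n(x) = x^n − 2(n−1)·Σ_{j=1}^{n−1} x^j + 1`. -/
noncomputable def Qpoly (n : ℕ) : Polynomial ℝ :=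
  X ^ n - C (2 * ((n : ℝ) - 1)) * (∑ j ∈ Finset.Icc 1 (n - 1), X ^ j) + 1

/-!
`C_n` is a nonnegative matrix with an explicit positive eigenvector: it grows geometrically with
ratio `L` along the two outer chains of coordinates and takes the values `a, b, a` on the three
middle coordinates; the eigen-equations of the middle rows have a solution with `a, b > 0` as soon
as `L > 1` is a root of `Q_n`. A positive eigenvector of a nonnegative matrix belongs to its
spectral radius (Collatz–Wielandt). Finally `Q_n` is palindromic and strictly decreasing on
`[0, 1]`, with `Q_n(0) = 1 > 0 > Q_n(1)`, so it has exactly one root in `(0, 1)` and hence exactly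
one root `L > 1`.
-/

open Finset Matrix Polynomial

theorem Matrix.mem_spectrum_iff_exists_mulVec_eq_smul {ι K : Type*} [Fintype ι] [DecidableEq ι]
    [Field K] {A : Matrix ι ι K} {μ : K} :
    μ ∈ spectrum K A ↔ ∃ w ≠ 0, A *ᵥ w = μ • w := by
  rw [← Matrix.spectrum_toLin', ← Module.End.hasEigenvalue_iff_mem_spectrum]
  constructor
  · intro h
    obtain ⟨w, hw⟩ := h.exists_hasEigenvector
    exact ⟨w, hw.2, by simpa using hw.apply_eq_smul⟩
  · rintro ⟨w, hw0, hw⟩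
    exact Module.End.hasEigenvalue_of_hasEigenvector
      ⟨Module.End.mem_eigenspace_iff.2 (by simpa using hw), hw0⟩

section CollatzWielandt

variable {ι : Type*} [Fintype ι] [DecidableEq ι] {A : Matrix ι ι ℝ} {v : ι → ℝ} {r : ℝ}

theorem norm_le_of_mem_spectrum_of_mulVec_eq_smul (hA : ∀ i j, 0 ≤ A i j) (hv : ∀ i, 0 < v i)
    (h : A *ᵥ v = r • v) {z : ℂ} (hz : z ∈ spectrum ℂ (A.map (algebraMap ℝ ℂ))) : ‖z‖ ≤ r := by
  obtain ⟨w, hw0, hw⟩ := Matrix.mem_spectrum_iff_exists_mulVec_eq_smul.1 hz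
  obtain ⟨k, hk⟩ := Function.ne_iff.1 hw0
  -- `c` is the least multiple of `v` dominating `|w|`; the row where it is attained gives the
  -- bound.
  obtain ⟨i, -, hi⟩ := exists_max_image univ (fun j => ‖w j‖ / v j) ⟨k, mem_univ k⟩
  set c := ‖w i‖ / v i
  have hwc : ∀ j, ‖w j‖ ≤ c * v j := fun j => (div_le_iff₀ (hv j)).1 (hi j (mem_univ j))
  have hc : 0 < c := (div_pos (norm_pos_iff.2 hk) (hv k)).trans_le (hi k (mem_univ k))
  have key : ‖z‖ * (c * v i) ≤ r * (c * v i) := calc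
    ‖z‖ * (c * v i) = ‖(A.map (algebraMap ℝ ℂ) *ᵥ w) i‖ := by
      rw [hw, div_mul_cancel₀ _ (hv i).ne', Pi.smul_apply, smul_eq_mul, norm_mul]
    _ ≤ ∑ j, A i j * ‖w j‖ := by
      refine (norm_sum_le _ _).trans_eq (sum_congr rfl fun j _ => ?_)
      simp [abs_of_nonneg (hA i j)]
    _ ≤ ∑ j, A i j * (c * v j) := by gcongr with j; exact hA i j; exact hwc j
    _ = r * (c * v i) := by
      have hrow : ∑ j, A i j * v j = r * v i := by simpa [mulVec, dotProduct] using congrFun h i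
      simp_rw [mul_left_comm _ c, ← mul_sum, hrow]
  exact le_of_mul_le_mul_right key (mul_pos hc (hv i))

theorem specRad_eq_of_mulVec_eq_smul [Nonempty ι] (hA : ∀ i j, 0 ≤ A i j) (hv : ∀ i, 0 < v i)
    (h : A *ᵥ v = r • v) : specRad A = r := by
  have hr : (r : ℂ) ∈ spectrum ℂ (A.map (algebraMap ℝ ℂ)) := by
    refine Matrix.mem_spectrum_iff_exists_mulVec_eq_smul.2
      ⟨fun i => (v i : ℂ), fun h0 => ?_, funext fun i => ?_⟩
    · obtain ⟨i⟩ := ‹Nonempty ι›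
      simpa [(hv i).ne'] using congrFun h0 i
    · have := congrFun h i
      simp only [mulVec, dotProduct, Pi.smul_apply, smul_eq_mul] at this ⊢
      simp only [map_apply, Complex.coe_algebraMap]
      exact_mod_cast this
  have hr0 : ‖(r : ℂ)‖ = r := by
    rw [Complex.norm_real, Real.norm_eq_abs, abs_eq_self]
    exact (abs_nonneg r).trans (by simpa using norm_le_of_mem_spectrum_of_mulVec_eq_smul hA hv h hr)
  refine IsGreatest.csSup_eq ⟨⟨r, hr, hr0⟩, ?_⟩
  rintro x ⟨z, hz, rfl⟩
  exact norm_le_of_mem_spectrum_of_mulVec_eq_smul hA hv h hz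

end CollatzWielandt

namespace Qpoly

theorem eval_eq (n : ℕ) (x : ℝ) :
    (Qpoly n).eval x = x ^ n - 2 * ((n : ℝ) - 1) * ∑ j ∈ Icc 1 (n - 1), x ^ j + 1 := by
  simp [Qpoly, eval_finsetSum]

theorem eval_inv_mul_pow (n : ℕ) {x : ℝ} (hx : x ≠ 0) :
    (Qpoly n).eval x⁻¹ * x ^ n = (Qpoly n).eval x := by
  have hreflect : ∑ j ∈ Icc 1 (n - 1), x⁻¹ ^ j * x ^ n = ∑ j ∈ Icc 1 (n - 1), x ^ j := by
    refine sum_nbij' (fun j => n - j) (fun j => n - j) ?_ ?_ ?_ ?_ ?_ <;>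
      intro j hj <;> simp only [mem_Icc] at hj ⊢
    iterate 4 omega
    rw [inv_pow, inv_mul_eq_div, div_eq_mul_inv, ← pow_sub₀ _ hx (by omega)]
  rw [eval_eq, eval_eq, add_mul, sub_mul, mul_assoc, sum_mul, hreflect, inv_pow,
    inv_mul_cancel₀ (pow_ne_zero _ hx)]
  ring

theorem eval_inv_eq_zero_iff (n : ℕ) {x : ℝ} (hx : x ≠ 0) :
    (Qpoly n).eval x⁻¹ = 0 ↔ (Qpoly n).eval x = 0 := by
  rw [← eval_inv_mul_pow n hx, mul_eq_zero, or_iff_left (pow_ne_zero _ hx)]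

theorem eval_zero {n : ℕ} (hn : 1 ≤ n) : (Qpoly n).eval 0 = 1 := by
  rw [eval_eq, zero_pow (by omega), sum_eq_zero fun j hj => zero_pow (by simp at hj; omega)]
  ring

theorem eval_one_neg {n : ℕ} (hn : 3 ≤ n) : (Qpoly n).eval 1 < 0 := by
  have h : (3 : ℝ) ≤ n := by exact_mod_cast hn
  simp only [eval_eq, one_pow, sum_const, Nat.card_Icc, nsmul_eq_mul, Nat.add_sub_cancel,
    Nat.cast_sub (by omega : 1 ≤ n), Nat.cast_one, mul_one]
  nlinarith

theorem strictAntiOn_eval {n : ℕ} (hn : 3 ≤ n) : StrictAntiOn (Qpoly n).eval (Set.Icc 0 1) := by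
  rintro s ⟨hs0, -⟩ t ⟨-, ht1⟩ hst
  have hpow : t ^ n - s ^ n ≤ n * (t - s) := by
    have hmax : max |t| |s| ^ (n - 1) ≤ 1 :=
      pow_le_one₀ (by positivity) (max_le (by rw [abs_of_nonneg (by linarith)]; exact ht1)
        (by rw [abs_of_nonneg hs0]; linarith))
    calc t ^ n - s ^ n ≤ |t - s| * n * max |t| |s| ^ (n - 1) :=
          (le_abs_self _).trans (abs_pow_sub_pow_le t s n)
      _ ≤ |t - s| * n * 1 := by gcongr
      _ = n * (t - s) := by rw [abs_of_pos (sub_pos.2 hst)]; ring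
  have hsum : t - s ≤ ∑ j ∈ Icc 1 (n - 1), (t ^ j - s ^ j) := by
    refine (single_le_sum (f := fun j => t ^ j - s ^ j) (fun j _ => sub_nonneg.2 ?_)
      (by simp; omega : 1 ∈ Icc 1 (n - 1))).trans_eq' (by simp)
    exact pow_le_pow_left₀ hs0 hst.le j
  have h : (3 : ℝ) ≤ n := by exact_mod_cast hn
  show (Qpoly n).eval t < (Qpoly n).eval s
  rw [eval_eq, eval_eq, ← sub_neg]
  rw [sum_sub_distrib] at hsum
  nlinarith

theorem eval_add_three (m : ℕ) (L : ℝ) :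
    (Qpoly (m + 3)).eval L
      = L ^ 2 * L ^ (m + 1) + 1 - 2 * (m + 2) * L * (∑ k ∈ range (m + 1), L ^ k + L ^ (m + 1)) := by
  rw [eval_eq, ← Ico_add_one_right_eq_Icc, sum_Ico_eq_sum_range,
    show m + 3 - 1 + 1 - 1 = m + 1 + 1 by omega, sum_range_succ]
  simp only [pow_add, pow_one, ← mul_sum]
  push_cast
  ring

theorem exists_unique_root_one_lt {n : ℕ} (hn : 3 ≤ n) :
    ∃ L : ℝ, 1 < L ∧ (Qpoly n).eval L = 0 ∧ ∀ x : ℝ, 1 < x → (Qpoly n).eval x = 0 → x = L := by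
  obtain ⟨t, ht, hQt⟩ : ∃ t ∈ Set.Icc (0 : ℝ) 1, (Qpoly n).eval t = 0 :=
    intermediate_value_Icc' zero_le_one (Qpoly n).continuous.continuousOn
      ⟨(eval_one_neg hn).le, by rw [eval_zero (by omega)]; exact zero_le_one⟩
  have ht0 : 0 < t := ht.1.lt_of_ne (by rintro rfl; simp [eval_zero (by omega : 1 ≤ n)] at hQt)
  have ht1 : t < 1 := ht.2.lt_of_ne (by rintro rfl; exact (eval_one_neg hn).ne hQt)
  refine ⟨t⁻¹, one_lt_inv₀ ht0 |>.2 ht1, (eval_inv_eq_zero_iff n ht0.ne').2 hQt,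
    fun x hx hQx => ?_⟩
  have hx0 : x ≠ 0 := by positivity
  have hinv : x⁻¹ = t :=
    (strictAntiOn_eval hn).injOn ⟨by positivity, inv_le_one_of_one_le₀ hx.le⟩ ht
    (((eval_inv_eq_zero_iff n hx0).2 hQx).trans hQt.symm)
  rw [← hinv, inv_inv]

end Qpoly

namespace Cfun

variable {m i : ℕ} (j : ℕ)

theorem row_of_lt (hi : i < m) : Cfun (m + 3) i j = if j = i + 1 then 1 else 0 := by
  unfold Cfun; split_ifs <;> first | omega | rfl

theorem row_m : Cfun (m + 3) m j = (if j = m + 1 then 1 else 0) + (if j = m + 2 then 1 else 0) := by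
  unfold Cfun; split_ifs <;> first | omega | norm_num

theorem row_m_add_one :
    Cfun (m + 3) (m + 1) j = if j < m + 3 then (m : ℝ) + 1 else (m : ℝ) + 2 := by
  unfold Cfun; split_ifs <;> first | omega | (push_cast; ring)

theorem row_m_add_two : Cfun (m + 3) (m + 2) j = 1 := by
  unfold Cfun; split_ifs <;> first | omega | rfl

theorem row_m_add_three :
    Cfun (m + 3) (m + 3) j = if j < m + 2 then (m : ℝ) + 2 else (m : ℝ) + 1 := by
  unfold Cfun; split_ifs <;> first | omega | (push_cast; ring)

theorem row_m_add_four :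
    Cfun (m + 3) (m + 4) j = (if j = m + 2 then 1 else 0) + (if j = m + 3 then 1 else 0) := by
  unfold Cfun; split_ifs <;> first | omega | norm_num

theorem row_of_gt (hi : m + 5 ≤ i) : Cfun (m + 3) i j = if j = i - 1 then 1 else 0 := by
  unfold Cfun; split_ifs <;> first | omega | rfl

theorem nonneg {n : ℕ} (hn : 2 ≤ n) (i j : ℕ) : 0 ≤ Cfun n i j := by
  have : (2 : ℝ) ≤ n := by exact_mod_cast hn
  unfold Cfun; split_ifs <;> linarith

end Cfun

theorem Finset.sum_range_ite_eq_mul {R : Type*} [NonAssocSemiring R] {N c : ℕ} (hc : c < N)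
    (f : ℕ → R) : ∑ j ∈ range N, (if j = c then 1 else 0) * f j = f c := by
  simp [ite_mul, hc]

theorem Finset.sum_range_add_ite_lt_mul {R : Type*} [NonUnitalNonAssocSemiring R] (k N : ℕ)
    (c d : R) (f : ℕ → R) :
    ∑ j ∈ range (k + N), (if j < k then c else d) * f j
      = c * ∑ j ∈ range k, f j + d * ∑ x ∈ range N, f (k + x) := by
  rw [sum_range_add, mul_sum, mul_sum]
  congr 1 <;> refine sum_congr rfl fun j hj => ?_
  · rw [if_pos (mem_range.1 hj)]
  · rw [if_neg (by omega)]

def perronVec (m : ℕ) (L a b : ℝ) (t : ℕ) : ℝ :=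
  if t ≤ m then L ^ t
  else if t = m + 1 then a
  else if t = m + 2 then b
  else if t = m + 3 then a
  else L ^ (2 * m + 4 - t)

/-- What rows `m, m + 1, m + 2` of `Cmat (m + 3) *ᵥ perronVec m L a b = L • perronVec m L a b`
reduce to (the other rows then hold as well); `∑ k ∈ range (m + 1), L ^ k` is the total weight of
each outer chain of coordinates. -/
structure PerronWeights (m : ℕ) (L a b : ℝ) : Prop where
  add_eq : a + b = L ^ (m + 1)
  row_m_add_one : (m + 1) * (∑ k ∈ range (m + 1), L ^ k + a + b)
    + (m + 2) * (∑ k ∈ range (m + 1), L ^ k + a) = L * a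
  row_m_add_two : (∑ k ∈ range (m + 1), L ^ k + a + b) + (∑ k ∈ range (m + 1), L ^ k + a) = L * b

namespace perronVec

variable {m : ℕ} {L a b : ℝ}

theorem pos (hL : 0 < L) (ha : 0 < a) (hb : 0 < b) (t : ℕ) : 0 < perronVec m L a b t := by
  unfold perronVec; split_ifs <;> positivity

theorem of_le {t : ℕ} (ht : t ≤ m) : perronVec m L a b t = L ^ t := if_pos ht

@[simp] theorem m_add_one : perronVec m L a b (m + 1) = a := by simp [perronVec]

@[simp] theorem m_add_two : perronVec m L a b (m + 2) = b := by simp [perronVec]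

@[simp] theorem m_add_three : perronVec m L a b (m + 3) = a := by simp [perronVec]

theorem of_ge {t : ℕ} (ht : m + 4 ≤ t) : perronVec m L a b t = L ^ (2 * m + 4 - t) := by
  unfold perronVec; split_ifs <;> first | omega | rfl

theorem sum_range_head :
    ∑ j ∈ range (m + 2), perronVec m L a b j = ∑ k ∈ range (m + 1), L ^ k + a := by
  rw [sum_range_succ, m_add_one]
  congr 1
  exact sum_congr rfl fun j hj => of_le (by simp at hj; omega)

theorem sum_range_tail :
    ∑ x ∈ range (m + 2), perronVec m L a b (m + 3 + x) = ∑ k ∈ range (m + 1), L ^ k + a := by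
  rw [sum_range_succ', add_zero, m_add_three, ← sum_range_reflect]
  congr 1
  refine sum_congr rfl fun j hj => ?_
  rw [of_ge (by omega)]
  congr 1
  simp at hj
  omega

theorem sum_Cfun_mul_of_outer (hab : a + b = L ^ (m + 1)) {i : ℕ} (hi : i ≤ m ∨ m + 4 ≤ i)
    (hi' : i < 2 * m + 5) :
    ∑ j ∈ range (2 * m + 5), Cfun (m + 3) i j * perronVec m L a b j = L * perronVec m L a b i := by
  obtain hlt | hm | rfl | hgt : i < m ∨ i = m ∨ i = m + 4 ∨ m + 5 ≤ i := by omega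
  · rw [sum_congr rfl fun j _ => by rw [Cfun.row_of_lt _ hlt], sum_range_ite_eq_mul (by omega),
      of_le hlt.le, of_le (by omega), pow_succ']
  · subst i
    simp only [Cfun.row_m, add_mul, sum_add_distrib,
      sum_range_ite_eq_mul (show m + 1 < 2 * m + 5 by omega),
      sum_range_ite_eq_mul (show m + 2 < 2 * m + 5 by omega), m_add_one, m_add_two, of_le le_rfl,
      ← pow_succ', hab]
  · simp only [Cfun.row_m_add_four, add_mul, sum_add_distrib,
      sum_range_ite_eq_mul (show m + 2 < 2 * m + 5 by omega),
      sum_range_ite_eq_mul (show m + 3 < 2 * m + 5 by omega), m_add_two, m_add_three, of_ge le_rfl]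
    rw [show 2 * m + 4 - (m + 4) = m by omega, ← pow_succ', ← hab, add_comm]
  · rw [sum_congr rfl fun j _ => by rw [Cfun.row_of_gt _ hgt], sum_range_ite_eq_mul (by omega),
      of_ge (show m + 4 ≤ i by omega), of_ge (show m + 4 ≤ i - 1 by omega), ← pow_succ']
    congr 1
    omega

theorem sum_Cfun_mul_of_middle (h : PerronWeights m L a b) {i : ℕ} (hi : m + 1 ≤ i)
    (hi' : i ≤ m + 3) :
    ∑ j ∈ range (2 * m + 5), Cfun (m + 3) i j * perronVec m L a b j = L * perronVec m L a b i := by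
  obtain rfl | rfl | rfl : i = m + 1 ∨ i = m + 2 ∨ i = m + 3 := by omega
  · rw [show 2 * m + 5 = m + 3 + (m + 2) by ring]
    simp only [Cfun.row_m_add_one, sum_range_add_ite_lt_mul, sum_range_succ _ (m + 2),
      sum_range_head, sum_range_tail, m_add_one, m_add_two]
    linarith [h.row_m_add_one]
  · rw [show 2 * m + 5 = m + 3 + (m + 2) by ring,
      sum_congr rfl fun j _ => by rw [Cfun.row_m_add_two, one_mul], sum_range_add,
      sum_range_succ _ (m + 2), sum_range_head, sum_range_tail, m_add_two]
    linarith [h.row_m_add_two]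
  · rw [show 2 * m + 5 = m + 2 + (m + 3) by ring,
      sum_congr rfl fun j _ => by rw [Cfun.row_m_add_three], sum_range_add_ite_lt_mul,
      sum_range_head, sum_range_succ' _ (m + 2)]
    simp only [show ∀ x, m + 2 + (x + 1) = m + 3 + x from fun x => by omega, add_zero,
      sum_range_tail, m_add_two, m_add_three]
    linarith [h.row_m_add_one]

theorem sum_Cfun_mul (h : PerronWeights m L a b) {i : ℕ} (hi : i < 2 * m + 5) :
    ∑ j ∈ range (2 * m + 5), Cfun (m + 3) i j * perronVec m L a b j = L * perronVec m L a b i := by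
  by_cases hout : i ≤ m ∨ m + 4 ≤ i
  · exact sum_Cfun_mul_of_outer h.add_eq hout hi
  · exact sum_Cfun_mul_of_middle h (by omega) (by omega)

end perronVec

theorem exists_perronWeights {m : ℕ} {L : ℝ} (hL : 1 < L) (hQ : (Qpoly (m + 3)).eval L = 0) :
    ∃ a b : ℝ, 0 < a ∧ 0 < b ∧ PerronWeights m L a b := by
  set T := ∑ k ∈ range (m + 1), L ^ k
  set P := L ^ (m + 1)
  have hT : T * (L - 1) = P - 1 := geom_sum_mul L (m + 1)
  rw [Qpoly.eval_add_three] at hQ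
  -- Rows `m` and `m + 2` force `a = P - b` and `b (L + 1) = 2 (P + T)`; row `m + 1` then
  -- amounts to `Q (L) = 0`, and it exhibits `a > 0`.
  obtain ⟨b, hb⟩ : ∃ b, b * (L + 1) = 2 * (P + T) :=
    ⟨_, div_mul_cancel₀ _ (by positivity : L + 1 ≠ 0)⟩
  have ha : (P - b) * ((m + 2) * L - 1) = (m + 1) * L * P + T := by
    refine mul_right_cancel₀ (show L + 1 ≠ 0 by positivity) ?_
    linear_combination (-((m : ℝ) + 2) * L + 1) * hb + hQ - hT
  refine ⟨P - b, b, ?_, ?_, ⟨by ring, by linear_combination (-((m : ℝ) + 1)) * hb - ha,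
    by linear_combination -hb⟩⟩
  · exact pos_of_mul_pos_left (by rw [ha]; positivity) (by nlinarith)
  · exact pos_of_mul_pos_left (by rw [hb]; positivity) (by positivity)

theorem specRad_Cmat_eq {m : ℕ} {L : ℝ} (hL : 1 < L) (hQ : (Qpoly (m + 3)).eval L = 0) :
    specRad (Cmat (m + 3)) = L := by
  obtain ⟨a, b, ha, hb, hw⟩ := exists_perronWeights hL hQ
  have : Nonempty (Fin (2 * (m + 3) - 1)) := ⟨⟨0, by omega⟩⟩
  have hv : ∀ j : Fin (2 * (m + 3) - 1), 0 < perronVec m L a b j :=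
    fun j => perronVec.pos (by linarith) ha hb _
  refine specRad_eq_of_mulVec_eq_smul (fun i j => Cfun.nonneg (by omega) _ _) hv
    (funext fun i => ?_)
  simp only [mulVec, dotProduct, Cmat, of_apply, Pi.smul_apply, smul_eq_mul]
  rw [Fin.sum_univ_eq_sum_range (fun j => Cfun (m + 3) i j * perronVec m L a b j)]
  convert perronVec.sum_Cfun_mul hw (i := i) (by omega) using 3
  omega

theorem stmt12 (n : ℕ) (hn : 3 ≤ n) :
    1 < specRad (Cmat n) ∧ (Qpoly n).eval (specRad (Cmat n)) = 0 ∧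
      ∀ x : ℝ, 1 < x → (Qpoly n).eval x = 0 → x = specRad (Cmat n) := by
  obtain ⟨L, hL, hQL, huniq⟩ := Qpoly.exists_unique_root_one_lt hn
  obtain ⟨m, rfl⟩ : ∃ m, n = m + 3 := ⟨n - 3, by omega⟩
  rw [specRad_Cmat_eq hL hQL]
  exact ⟨hL, hQL, huniq⟩
end
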